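/- arXiv:2512.20183 — 12 statements merged into one kernel-verified Lean document; each statement's English description precedes it below -/
import Mathlib

section
/- Let R be a finite commutative local ring. Every nontrivial idempotent matrix A in M₂(R) is conjugate (by an element of GL₂(R)) to the matrix M(1,0) with first row (1,0) and second row (0,0). -/
private lemma localIdem {R : Type*} [CommRing R] [IsLocalRing R] {e : R}
    (he : IsIdempotentElem e) : e = 0 ∨ e = 1 := by
  rcases IsLocalRing.isUnit_or_isUnit_one_sub_self e with h | h
  · exact Or.inr (h.mul_left_cancel (by rw [mul_one]; exact he))
  · refine Or.inl (h.mul_left_cancel ?_)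
    have h2 : e * e = e := he
    linear_combination -h2

/-- Every nontrivial idempotent 2×2 matrix over a finite commutative local ring is
conjugate under `GL₂(R)` to `M(1,0) = !![1,0;0,0]`. -/
theorem nontrivial_idempotent_conjugate_M10 (R : Type*) [CommRing R] [Finite R]
    [IsLocalRing R] (A : Matrix (Fin 2) (Fin 2) R)
    (hA : IsIdempotentElem A) (h0 : A ≠ 0) (h1 : A ≠ 1) :
    ∃ P : (Matrix (Fin 2) (Fin 2) R)ˣ,
      A = (P : Matrix (Fin 2) (Fin 2) R) * !![1, 0; 0, 0] * ((P⁻¹ : _) : Matrix (Fin 2) (Fin 2) R) := by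
  set a := A 0 0 with ha
  set b := A 0 1 with hb
  set c := A 1 0 with hc
  set d := A 1 1 with hd
  have hAeq : A = !![a, b; c, d] := by
    ext i j; fin_cases i <;> fin_cases j <;> rfl
  have e00 : a * a + b * c = a := by
    have := congrFun (congrFun hA 0) 0
    simpa [Matrix.mul_apply, Fin.sum_univ_two] using this
  have e01 : a * b + b * d = b := by
    have := congrFun (congrFun hA 0) 1
    simpa [Matrix.mul_apply, Fin.sum_univ_two] using this
  have e10 : c * a + d * c = c := by
    have := congrFun (congrFun hA 1) 0
    have h' : c * a + d * c = c := by
      simpa [Matrix.mul_apply, Fin.sum_univ_two, mul_comm] using this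
    exact h'
  have e11 : c * b + d * d = d := by
    have := congrFun (congrFun hA 1) 1
    have h' : c * b + d * d = d := by
      simpa [Matrix.mul_apply, Fin.sum_univ_two, mul_comm] using this
    exact h'
  have hdetIdem : IsIdempotentElem A.det := by
    unfold IsIdempotentElem
    rw [← Matrix.det_mul, hA]
  have hdet : A.det = 0 := by
    rcases localIdem hdetIdem with h | h
    · exact h
    · exact absurd
        (((Matrix.isUnit_iff_isUnit_det A).mpr (h ▸ isUnit_one)).mul_left_cancel
          (by rw [mul_one]; exact hA)) h1
  have hdet2 : a * d - b * c = 0 := by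
    rw [← hdet, Matrix.det_fin_two]
  have key : IsUnit a ∨ IsUnit d := by
    by_contra h
    push_neg at h
    obtain ⟨hna, hnd⟩ := h
    have hm : IsUnit (1 - (a + d)) := by
      rcases IsLocalRing.isUnit_or_isUnit_one_sub_self (a + d) with h' | h'
      · rcases IsLocalRing.isUnit_or_isUnit_of_isUnit_add h' with h'' | h''
        · exact absurd h'' hna
        · exact absurd h'' hnd
      · exact h'
    have hb0 : b = 0 := (hm.mul_right_eq_zero).mp (by linear_combination b - e01)
    have hc0 : c = 0 := (hm.mul_right_eq_zero).mp (by linear_combination c - e10)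
    have ha0 : a = 0 := (hm.mul_right_eq_zero).mp (by linear_combination -e00 - hdet2)
    have hd0 : d = 0 := (hm.mul_right_eq_zero).mp (by linear_combination -e11 - hdet2)
    exact h0 (by rw [hAeq, ha0, hb0, hc0, hd0]; ext i j; fin_cases i <;> fin_cases j <;> simp)
  rcases key with hu | hu
  · -- P = !![a, b; c, -a]
    set P0 : Matrix (Fin 2) (Fin 2) R := !![a, b; c, -a] with hP0
    have hdetP : P0.det = -a := by rw [hP0, Matrix.det_fin_two_of]; linear_combination -e00
    have hUP : IsUnit P0 := (Matrix.isUnit_iff_isUnit_det P0).mpr (hdetP ▸ hu.neg)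
    obtain ⟨u, huu⟩ := hUP
    refine ⟨u, ?_⟩
    have hmul : A * (u : Matrix (Fin 2) (Fin 2) R) = (u : Matrix (Fin 2) (Fin 2) R) * !![1, 0; 0, 0] := by
      rw [huu, hP0, hAeq]
      ext i j
      fin_cases i <;> fin_cases j <;>
        simp [Matrix.mul_apply, Fin.sum_univ_two] <;>
        first | ring1 | linear_combination e00 | linear_combination e10 | linear_combination -hdet2
    calc A = A * (↑u * ↑u⁻¹) := by rw [Units.mul_inv, mul_one]
      _ = (↑u * !![1, 0; 0, 0]) * ↑u⁻¹ := by rw [← mul_assoc, hmul]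
      _ = ↑u * !![1, 0; 0, 0] * ↑u⁻¹ := rfl
  · -- P = !![b, d; d, -c]
    set P0 : Matrix (Fin 2) (Fin 2) R := !![b, d; d, -c] with hP0
    have hdetP : P0.det = -d := by rw [hP0, Matrix.det_fin_two_of]; linear_combination -e11
    have hUP : IsUnit P0 := (Matrix.isUnit_iff_isUnit_det P0).mpr (hdetP ▸ hu.neg)
    obtain ⟨u, huu⟩ := hUP
    refine ⟨u, ?_⟩
    have hmul : A * (u : Matrix (Fin 2) (Fin 2) R) = (u : Matrix (Fin 2) (Fin 2) R) * !![1, 0; 0, 0] := by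
      rw [huu, hP0, hAeq]
      ext i j
      fin_cases i <;> fin_cases j <;>
        simp [Matrix.mul_apply, Fin.sum_univ_two] <;>
        first | ring1 | linear_combination e01 | linear_combination e11 | linear_combination hdet2 | linear_combination -hdet2
    calc A = A * (↑u * ↑u⁻¹) := by rw [Units.mul_inv, mul_one]
      _ = (↑u * !![1, 0; 0, 0]) * ↑u⁻¹ := by rw [← mul_assoc, hmul]
      _ = ↑u * !![1, 0; 0, 0] * ↑u⁻¹ := rfl
end

section
/- Let R be a finite local principal ring of cardinality q^n with residue field R/J(R) ≅ GF(q), where q = p^r. Then there exists x ∈ J(R) such that J(R)^k = (x^k) for every k ∈ {0,1,…,n}, and in particular |J(R)^k| = q^{n−k} for every such k. -/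
/-- In a finite local principal ring `R` of cardinality `q ^ n` with residue field of
cardinality `q = p ^ r`, there exists `x ∈ J(R)` such that `J(R) ^ k = (x ^ k)` for every
`k ∈ {0, 1, …, n}`; in particular `|J(R) ^ k| = q ^ (n - k)` for every such `k`. -/
theorem exists_generator_powers_jacobson (R : Type*) [CommRing R] [Finite R]
    [IsLocalRing R] [IsPrincipalIdealRing R] (p n r q : ℕ) (hp : p.Prime)
    (hn : 0 < n) (hr : 0 < r) (hq : q = p ^ r)
    (hcard : Nat.card R = q ^ n)
    (hres : Nat.card (R ⧸ IsLocalRing.maximalIdeal R) = q) :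
    ∃ x ∈ IsLocalRing.maximalIdeal R, ∀ k ≤ n,
      (IsLocalRing.maximalIdeal R) ^ k = Ideal.span {x ^ k} ∧
      Nat.card ((IsLocalRing.maximalIdeal R) ^ k : Ideal R) = q ^ (n - k) := by
  classical
  set m := IsLocalRing.maximalIdeal R with hm
  set x := Submodule.IsPrincipal.generator m with hxdef
  have hxspan : Ideal.span {x} = m := Submodule.IsPrincipal.span_singleton_generator m
  have hxmem : x ∈ m := Submodule.IsPrincipal.generator_mem m
  -- x is nilpotent
  have hnil : IsNilpotent x := by
    have h1 : IsNilpotent m := by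
      have h := IsArtinianRing.isNilpotent_jacobson_bot (R := R)
      rwa [IsLocalRing.jacobson_eq_maximalIdeal ⊥ bot_ne_top] at h
    obtain ⟨e, he⟩ := h1
    refine ⟨e, ?_⟩
    have := Ideal.pow_mem_pow hxmem e
    rw [he] at this
    simpa using this
  set e := Nat.find hnil with hedef
  have he0 : x ^ e = 0 := Nat.find_spec hnil
  have hlt : ∀ k < e, x ^ k ≠ 0 := fun k hk => Nat.find_min hnil hk
  -- key lemma: for k < e, if r * x^k ∈ (x^{k+1}) then r ∈ m
  have keyA : ∀ k < e, ∀ s : R, s * x ^ k ∈ Ideal.span {x ^ (k + 1)} → s ∈ m := by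
    intro k hk s hs
    by_contra hsm
    have hu : IsUnit s := by
      by_contra h
      exact hsm (IsLocalRing.mem_maximalIdeal s |>.mpr h)
    obtain ⟨t, ht⟩ := Ideal.mem_span_singleton.mp hs
    obtain ⟨u, hu'⟩ := hu
    -- x^k = (u⁻¹ * t * x) * x^k
    have hx1 : x ^ k * (1 - (↑u⁻¹ * t * x)) = 0 := by
      have : (↑u⁻¹ : R) * (s * x ^ k) = ↑u⁻¹ * (x ^ (k + 1) * t) := by rw [ht]
      rw [← hu'] at this
      have h2 : x ^ k = ↑u⁻¹ * t * x * x ^ k := by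
        calc x ^ k = ↑u⁻¹ * ↑u * x ^ k := by rw [Units.inv_mul, one_mul]
        _ = ↑u⁻¹ * (↑u * x ^ k) := by ring
        _ = ↑u⁻¹ * (x ^ (k + 1) * t) := by rw [← this]
        _ = ↑u⁻¹ * t * x * x ^ k := by rw [pow_succ]; ring
      linear_combination h2
    have hunit : IsUnit (1 - (↑u⁻¹ * t * x)) := by
      apply IsLocalRing.isUnit_one_sub_self_of_mem_nonunits
      exact m.mul_mem_left _ hxmem
    have : x ^ k = 0 := (hunit.mul_left_eq_zero).mp hx1
    exact hlt k hk this
  -- cardinality step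
  have step : ∀ k < e,
      Nat.card (Ideal.span {x ^ k} : Ideal R)
        = q * Nat.card (Ideal.span {x ^ (k + 1)} : Ideal R) := by
    intro k hk
    set I : Ideal R := Ideal.span {x ^ (k + 1)} with hI
    set J : Ideal R := Ideal.span {x ^ k} with hJ
    have hIJ : I ≤ J :=
      Ideal.span_singleton_le_span_singleton.mpr (pow_dvd_pow x k.le_succ)
    set f : R →ₗ[R] R ⧸ I := LinearMap.toSpanSingleton R (R ⧸ I) (Ideal.Quotient.mk I (x ^ k))
      with hf
    have hker : LinearMap.ker f = m := by
      ext s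
      have hfs : f s = Ideal.Quotient.mk I (s * x ^ k) := by
        rw [hf, LinearMap.toSpanSingleton_apply, ← Ideal.Quotient.mk_eq_mk,
          ← Ideal.Quotient.mk_eq_mk, ← Submodule.Quotient.mk_smul, smul_eq_mul]
      constructor
      · intro hsk
        have : s * x ^ k ∈ I := by
          rw [← Ideal.Quotient.eq_zero_iff_mem, ← hfs]
          exact hsk
        exact keyA k hk s this
      · intro hsm
        rw [← hxspan] at hsm
        obtain ⟨t, ht⟩ := Ideal.mem_span_singleton.mp hsm
        have : s * x ^ k ∈ I := by
          rw [ht, hI]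
          exact Ideal.mem_span_singleton.mpr ⟨t, by rw [pow_succ]; ring⟩
        simp only [LinearMap.mem_ker, hfs]
        rwa [Ideal.Quotient.eq_zero_iff_mem]
      -- done
    have hrange : Nat.card (LinearMap.range f) = q := by
      have := Nat.card_congr (f.quotKerEquivRange).toEquiv
      rw [hker] at this
      rw [← this, hres]
    -- inclusion map J → R ⧸ I
    set g : J →ₗ[R] R ⧸ I := I.mkQ.comp J.subtype with hg
    have hkerg : LinearMap.ker g = Submodule.comap J.subtype I := by
      rw [hg, LinearMap.ker_comp, Submodule.ker_mkQ]
    have hrangeg : LinearMap.range g = LinearMap.range f := by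
      rw [hg, LinearMap.range_comp, Submodule.range_subtype, ← LinearMap.span_singleton_eq_range]
      have h1 : Submodule.map I.mkQ (Ideal.span {x ^ k}) = Submodule.span R (⇑I.mkQ '' {x ^ k}) :=
        Submodule.map_span I.mkQ {x ^ k}
      rw [hJ, h1]
      simp [Ideal.Quotient.mk_eq_mk]
    have hcardI : Nat.card (LinearMap.ker g) = Nat.card I := by
      rw [hkerg]
      exact Nat.card_congr (Submodule.comapSubtypeEquivOfLe hIJ).toEquiv
    have hsplit := Submodule.card_eq_card_quotient_mul_card (LinearMap.ker g)
    have hquot : Nat.card (J ⧸ LinearMap.ker g) = q := by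
      rw [Nat.card_congr (g.quotKerEquivRange).toEquiv, hrangeg, hrange]
    rw [hcardI, hquot] at hsplit
    rw [hsplit]; ring
  -- card of span {x^k} for k ≤ e
  have cardpow : ∀ j ≤ e, Nat.card (Ideal.span {x ^ (e - j)} : Ideal R) = q ^ j := by
    intro j
    induction j with
    | zero =>
      intro _
      have hb : (Ideal.span {x ^ (e - 0)} : Ideal R) = ⊥ := by
        rw [Nat.sub_zero, he0]
        exact Ideal.span_singleton_eq_bot.mpr rfl
      rw [hb, pow_zero]
      exact Nat.card_unique
    | succ j ih =>
      intro hj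
      have hj' : j ≤ e := Nat.le_of_succ_le hj
      have hlt' : e - (j + 1) < e := by omega
      have := step (e - (j + 1)) hlt'
      have hsucc : e - (j + 1) + 1 = e - j := by omega
      rw [hsucc] at this
      rw [this, ih hj', pow_succ]; ring
  -- e = n
  have hq1 : 1 < q := by
    rw [hq]; exact Nat.one_lt_pow (by omega) hp.one_lt
  have hcard0 : Nat.card (Ideal.span {x ^ (e - e)} : Ideal R) = q ^ e := cardpow e le_rfl
  have htop : (Ideal.span {x ^ (e - e)} : Ideal R) = ⊤ := by
    simp [Nat.sub_self, Ideal.span_singleton_eq_top]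
  have hcardtop : Nat.card (Ideal.span {x ^ (e - e)} : Ideal R) = Nat.card R := by
    rw [htop]
    exact Nat.card_congr Submodule.topEquiv.toEquiv
  have hen : e = n := by
    have : q ^ e = q ^ n := by rw [← hcard0, hcardtop, hcard]
    exact Nat.pow_right_injective hq1 this
  -- conclude
  refine ⟨x, hxmem, fun k hk => ?_⟩
  have hpow : m ^ k = Ideal.span {x ^ k} := by
    rw [← hxspan, Ideal.span_singleton_pow]
  refine ⟨hpow, ?_⟩
  rw [hpow]
  have := cardpow (n - k) (by omega)
  rw [hen] at this
  have hnk : n - (n - k) = k := by omega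
  rw [hnk] at this
  exact this
end

section
/- Let R be a finite commutative local ring in which 2 is a zero-divisor (equivalently, not invertible). Then the quaternion ring H(R) is a finite local ring, and in particular its only idempotents are 0 and 1. -/
open Quaternion

lemma isUnit_quaternion_of_normSq {R : Type*} [CommRing R] (x : ℍ[R])
    (h : IsUnit (normSq x)) : IsUnit x := by
  obtain ⟨u, hu⟩ := h
  refine isUnit_iff_exists.2 ⟨((u⁻¹ : Rˣ) : R) • star x, ?_, ?_⟩
  · rw [Algebra.mul_smul_comm, self_mul_star, ← hu, ← coe_smul, smul_eq_mul,
      Units.inv_mul, coe_one]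
  · rw [Algebra.smul_mul_assoc, star_mul_self, ← hu, ← coe_smul, smul_eq_mul,
      Units.inv_mul, coe_one]

lemma normSq_key {R : Type*} [CommRing R] (x : ℍ[R]) :
    ∃ c : R, normSq x = (x.re + x.imI + x.imJ + x.imK) ^ 2 + 2 * c := by
  refine ⟨-(x.re * x.imI + x.re * x.imJ + x.re * x.imK + x.imI * x.imJ + x.imI * x.imK +
    x.imJ * x.imK), ?_⟩
  rw [normSq_def']
  ring

/-- If `2` is not invertible in a finite commutative local ring `R`, then the quaternion
ring `H(R)` is a (finite) local ring, and in particular its only idempotents are `0` and `1`. -/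
theorem quaternion_isLocalRing_of_two_not_unit (R : Type*) [CommRing R] [Finite R]
    [IsLocalRing R] (h2 : ¬ IsUnit (2 : R)) :
    IsLocalRing ℍ[R] ∧ ∀ x : ℍ[R], IsIdempotentElem x → x = 0 ∨ x = 1 := by
  have h2m : (2 : R) ∈ IsLocalRing.maximalIdeal R := h2
  have key : ∀ x : ℍ[R], IsUnit x ∨ IsUnit (1 - x) := by
    intro x
    set s : R := x.re + x.imI + x.imJ + x.imK with hs
    by_cases hsu : IsUnit s
    · left
      apply isUnit_quaternion_of_normSq
      obtain ⟨c, hc⟩ := normSq_key x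
      by_contra hn
      have hnm : normSq x ∈ IsLocalRing.maximalIdeal R := hn
      have : s ^ 2 ∈ IsLocalRing.maximalIdeal R := by
        have : s ^ 2 = normSq x - 2 * c := by rw [hc]; ring
        rw [this]
        exact sub_mem hnm (Ideal.mul_mem_right _ _ h2m)
      exact (IsLocalRing.mem_maximalIdeal _).mp this (hsu.pow 2)
    · right
      apply isUnit_quaternion_of_normSq
      obtain ⟨c, hc⟩ := normSq_key (1 - x)
      have hsum : (1 - x).re + (1 - x).imI + (1 - x).imJ + (1 - x).imK = 1 - s := by
        simp [hs]; ring
      rw [hsum] at hc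
      have hsm : s ∈ IsLocalRing.maximalIdeal R := hsu
      have h1s : IsUnit (1 - s) := by
        by_contra hn
        have : (1 : R) ∈ IsLocalRing.maximalIdeal R := by
          have : (1 : R) = (1 - s) + s := by ring
          rw [this]
          exact add_mem (hn : _ ∈ IsLocalRing.maximalIdeal R) hsm
        exact (IsLocalRing.maximalIdeal.isMaximal R).ne_top (Ideal.eq_top_of_isUnit_mem _ this
          isUnit_one)
      by_contra hn
      have hnm : normSq (1 - x) ∈ IsLocalRing.maximalIdeal R := hn
      have : (1 - s) ^ 2 ∈ IsLocalRing.maximalIdeal R := by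
        have : (1 - s) ^ 2 = normSq (1 - x) - 2 * c := by rw [hc]; ring
        rw [this]
        exact sub_mem hnm (Ideal.mul_mem_right _ _ h2m)
      exact (IsLocalRing.mem_maximalIdeal _).mp this (h1s.pow 2)
  have hloc : IsLocalRing ℍ[R] := by
    refine ⟨fun {a b} hab => ?_⟩
    rcases key a with h | h
    · exact Or.inl h
    · right
      have hb : b = 1 - a := by rw [← hab]; abel
      rwa [hb]
  refine ⟨hloc, fun x hx => ?_⟩
  rcases key x with h | h
  · exact Or.inr (h.mul_left_cancel (by rw [mul_one]; exact hx))
  · left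
    have h1x : IsIdempotentElem (1 - x) := hx.one_sub
    have : (1 : ℍ[R]) - x = 1 := h.mul_left_cancel (by rw [mul_one]; exact h1x)
    exact sub_eq_self.mp this
end

section
/- Let R be a finite commutative local ring in which 2 is invertible. Then the quaternion ring H(R) is isomorphic to the matrix ring M₂(R). -/
/-!
Over the residue field, a finite field, `-1` is a sum of two squares `x² + y²` with `x ≠ 0`
(by counting values of quadratics). The maximal ideal of a finite local ring is nilpotent, so the
ring is Henselian, and since `2` is a unit the square root `x` of `-1 - y²` lifts. Given
`a² + b² = -1`, the matrices `[[a, b], [b, -a]]` and `[[0, 1], [-1, 0]]` are anticommuting square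
roots of `-1`, and together with `1` and their product they form a basis of `M₂(R)`.
-/

open Quaternion IsLocalRing Polynomial

theorem FiniteField.exists_sq_add_sq {F : Type*} [Field F] [Finite F] (c : F) :
    ∃ x y : F, x ^ 2 + y ^ 2 = c := by
  have := Fintype.ofFinite F
  by_cases hF : ringChar F = 2
  · obtain ⟨x, hx⟩ := FiniteField.isSquare_of_char_two hF c
    exact ⟨x, 0, by rw [hx]; ring⟩
  · obtain ⟨x, y, h⟩ := FiniteField.exists_root_sum_quadratic (f := X ^ 2) (g := X ^ 2 - C c)
      (degree_X_pow 2) (degree_X_pow_sub_C two_pos c) (FiniteField.odd_card_of_char_ne_two hF)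
    exact ⟨x, y, by simpa [sub_eq_zero, ← add_sub_assoc] using h⟩

theorem IsLocalRing.isSquare_of_isSquare_residue {R : Type*} [CommRing R] [IsLocalRing R]
    [HenselianRing R (maximalIdeal R)] (h2 : IsUnit (2 : R)) {u : R} (hu : IsUnit u)
    (h : IsSquare (residue R u)) : IsSquare u := by
  obtain ⟨r, hr⟩ := h
  obtain ⟨r₀, rfl⟩ := residue_surjective r
  have hr₀ : IsUnit r₀ := by
    rw [← residue_ne_zero_iff_isUnit]
    rintro h0
    rw [h0, mul_zero, residue_eq_zero_iff] at hr
    exact (mem_maximalIdeal u).1 hr hu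
  obtain ⟨a, ha, -⟩ := HenselianRing.is_henselian (I := maximalIdeal R) (X ^ 2 - C u)
    (monic_X_pow_sub_C u two_ne_zero) r₀
    (by rw [← residue_eq_zero_iff]; simp [hr, sq])
    (by
      have hder : (derivative (X ^ 2 - C u)).eval r₀ = 2 * r₀ := by simp; ring
      exact hder ▸ (h2.mul hr₀).map _)
  exact ⟨a, by simpa [sub_eq_zero, sq, eq_comm] using ha⟩

theorem IsLocalRing.exists_sq_add_sq_eq_neg_one {R : Type*} [CommRing R] [IsLocalRing R]
    [HenselianRing R (maximalIdeal R)] [Finite (ResidueField R)] (h2 : IsUnit (2 : R)) :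
    ∃ a b : R, a ^ 2 + b ^ 2 = -1 := by
  obtain ⟨x, y, hxy, hx⟩ : ∃ x y : ResidueField R, x ^ 2 + y ^ 2 = -1 ∧ x ≠ 0 := by
    obtain ⟨x, y, h⟩ := FiniteField.exists_sq_add_sq (-1 : ResidueField R)
    by_cases hx : x = 0
    · refine ⟨y, x, by rw [add_comm, h], ?_⟩
      rintro rfl
      simp [hx] at h
    · exact ⟨x, y, h, hx⟩
  obtain ⟨b, rfl⟩ := residue_surjective y
  have hres : residue R (-1 - b ^ 2) = x ^ 2 := by
    simp only [map_sub, map_neg, map_one, map_pow]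
    linear_combination -hxy
  have hu : IsUnit (-1 - b ^ 2) := by
    rw [← residue_ne_zero_iff_isUnit, hres]
    exact pow_ne_zero 2 hx
  obtain ⟨a, ha⟩ := isSquare_of_isSquare_residue h2 hu ⟨x, by rw [hres, sq]⟩
  exact ⟨a, b, by linear_combination -ha⟩

section QuaternionMatrix

variable {R : Type*} [CommRing R] {a b : R}

def quaternionBasisMatrix (hab : a ^ 2 + b ^ 2 = -1) :
    QuaternionAlgebra.Basis (Matrix (Fin 2) (Fin 2) R) (-1 : R) 0 (-1 : R) where
  i := !![a, b; b, -a]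
  j := !![0, 1; -1, 0]
  k := !![-b, a; a, b]
  i_mul_i := by
    ext i j
    fin_cases i <;> fin_cases j <;> simp [Matrix.one_fin_two] <;> grind
  j_mul_j := by ext i j; fin_cases i <;> fin_cases j <;> simp
  i_mul_j := by ext i j; fin_cases i <;> fin_cases j <;> simp
  j_mul_i := by ext i j; fin_cases i <;> fin_cases j <;> simp

theorem quaternionBasisMatrix_liftHom_apply (hab : a ^ 2 + b ^ 2 = -1) (q : ℍ[R]) :
    (quaternionBasisMatrix hab).liftHom q =
      !![q.re + a * q.imI - b * q.imK, b * q.imI + q.imJ + a * q.imK;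
         b * q.imI - q.imJ + a * q.imK, q.re - a * q.imI + b * q.imK] := by
  ext i j
  fin_cases i <;> fin_cases j <;>
    simp [quaternionBasisMatrix, QuaternionAlgebra.Basis.liftHom, QuaternionAlgebra.Basis.lift,
      Matrix.algebraMap_matrix_apply] <;> ring

theorem quaternionBasisMatrix_liftHom_bijective [Invertible (2 : R)]
    (hab : a ^ 2 + b ^ 2 = -1) : Function.Bijective (quaternionBasisMatrix hab).liftHom := by
  -- coordinates read off by the trace form: the coefficient of a basis element `e` is `± tr (M e) / 2`
  let g : Matrix (Fin 2) (Fin 2) R → ℍ[R] := fun M =>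
    ⟨⅟2 * (M 0 0 + M 1 1), -⅟2 * (a * (M 0 0 - M 1 1) + b * (M 0 1 + M 1 0)),
      ⅟2 * (M 0 1 - M 1 0), ⅟2 * (b * (M 0 0 - M 1 1) - a * (M 0 1 + M 1 0))⟩
  have h2 : (2 : R) * ⅟2 = 1 := mul_invOf_self 2
  refine ⟨Function.LeftInverse.injective (g := g) fun q => ?_,
    Function.RightInverse.surjective (g := g) fun M => ?_⟩
  · rw [quaternionBasisMatrix_liftHom_apply]
    ext <;> simp [g] <;> grind
  · rw [quaternionBasisMatrix_liftHom_apply]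
    ext i j
    fin_cases i <;> fin_cases j <;> simp [g] <;> grind

end QuaternionMatrix

/-- If `2` is invertible in a finite commutative local ring `R`, then the quaternion ring
`H(R)` is isomorphic to the ring of 2×2 matrices over `R`. -/
theorem quaternion_iso_matrix_of_two_unit (R : Type*) [CommRing R] [Finite R]
    [IsLocalRing R] (h2 : IsUnit (2 : R)) :
    Nonempty (ℍ[R] ≃+* Matrix (Fin 2) (Fin 2) R) := by
  have : Finite (ResidueField R) := .of_surjective _ residue_surjective
  obtain ⟨a, b, hab⟩ := exists_sq_add_sq_eq_neg_one h2
  let := h2.invertible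
  exact ⟨(AlgEquiv.ofBijective _ (quaternionBasisMatrix_liftHom_bijective hab)).toRingEquiv⟩
end

section
/- Let R be a finite commutative local principal ring and let a, a', b, b' ∈ R. Write M(a,b) for the 2×2 matrix with first row (a,b) and zero second row. Then M(a,b) and M(a',b') are conjugate under GL₂(R) if and only if a = a' and there exists a unit u ∈ U(R) such that b' − ub lies in the ideal (a). -/
/-!
Conjugacy preserves the trace, which gives `a = a'`. A conjugator `[[p, q], [r, s]]` with
`P * M(a,b) = M(a,b') * P` has unit determinant `p s - q r`, so in a local ring `p s` or `q r`
is a unit. If `s` is a unit, the `(0,1)` entry reads `p b = a q + b' s`, i.e.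
`b' ≡ s⁻¹ p b (mod a)`; if `r` is a unit, the second row and the `(0,0)` entry force
`b = b' = 0`. Conversely `[[1, c], [0, u]]` conjugates `M(a, u b + a c)` to `M(a, b)`.
-/

open Matrix

theorem isConj_iff_exists_eq_mul_mul_inv {α : Type*} [Monoid α] {x y : α} :
    IsConj x y ↔ ∃ P : αˣ, y = P * x * ↑P⁻¹ :=
  exists_congr fun P => by rw [Units.eq_mul_inv_iff_mul_eq, eq_comm, SemiconjBy]

theorem IsConj.trace_eq {n R : Type*} [Fintype n] [DecidableEq n] [CommRing R]
    {A B : Matrix n n R} (h : IsConj A B) : A.trace = B.trace := by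
  obtain ⟨P, hP⟩ := isConj_iff_exists_eq_mul_mul_inv.mp h
  rw [hP, trace_units_conj]

section ZeroSecondRow

variable {R : Type*} [CommRing R]

theorem semiconjBy_zero_row_iff {a b a' b' p q r s : R} :
    SemiconjBy !![p, q; r, s] !![a, b; 0, 0] !![a', b'; 0, 0] ↔
      p * a = a' * p + b' * r ∧ p * b = a' * q + b' * s ∧ r * a = 0 ∧ r * b = 0 := by
  simp [SemiconjBy, and_assoc]

theorem semiconjBy_upperTriangular (a b c u : R) :
    SemiconjBy !![1, c; 0, u] !![a, u * b + a * c; 0, 0] !![a, b; 0, 0] :=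
  semiconjBy_zero_row_iff.mpr ⟨by ring, by ring, by ring, by ring⟩

theorem exists_isUnit_sub_mul_mem_span_of_semiconjBy [IsLocalRing R] {a b b' p q r s : R}
    (hdet : IsUnit (p * s - q * r))
    (h : SemiconjBy !![p, q; r, s] !![a, b; 0, 0] !![a, b'; 0, 0]) :
    ∃ u : R, IsUnit u ∧ b' - u * b ∈ Ideal.span {a} := by
  obtain ⟨h00, h01, -, h11⟩ := semiconjBy_zero_row_iff.mp h
  rw [sub_eq_add_neg] at hdet
  rcases IsLocalRing.isUnit_or_isUnit_of_isUnit_add hdet with hps | hqr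
  · obtain ⟨w, hw⟩ := (isUnit_of_mul_isUnit_right hps).exists_left_inv
    refine ⟨w * p, (IsUnit.of_mul_eq_one s hw).mul (isUnit_of_mul_isUnit_left hps), ?_⟩
    exact Ideal.mem_span_singleton'.mpr ⟨-(w * q), by linear_combination w * h01 + b' * hw⟩
  · have hr : IsUnit r := isUnit_of_mul_isUnit_right ((IsUnit.neg_iff _).mp hqr)
    have hb : b = 0 := hr.mul_right_eq_zero.mp h11
    have hb' : b' = 0 := hr.mul_left_eq_zero.mp (by linear_combination -h00)
    exact ⟨1, isUnit_one, by simp [hb, hb']⟩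

theorem IsConj.exists_isUnit_sub_mul_mem_span [IsLocalRing R] {a b b' : R}
    (h : IsConj !![a, b; 0, 0] !![a, b'; 0, 0]) :
    ∃ u : R, IsUnit u ∧ b' - u * b ∈ Ideal.span {a} := by
  obtain ⟨P, hP⟩ := h
  rw [eta_fin_two (P : Matrix (Fin 2) (Fin 2) R)] at hP
  refine exists_isUnit_sub_mul_mem_span_of_semiconjBy ?_ hP
  rw [← det_fin_two_of, ← eta_fin_two]
  exact (isUnit_iff_isUnit_det _).mp P.isUnit

theorem isConj_of_sub_mul_mem_span {a b b' u : R} (hu : IsUnit u)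
    (h : b' - u * b ∈ Ideal.span {a}) : IsConj !![a, b; 0, 0] !![a, b'; 0, 0] := by
  obtain ⟨c, hc⟩ := Ideal.mem_span_singleton'.mp h
  have hQ : IsUnit !![(1 : R), c; 0, u] := by simpa [isUnit_iff_isUnit_det] using hu
  obtain rfl : b' = u * b + a * c := by linear_combination -hc
  exact IsConj.symm ⟨hQ.unit, semiconjBy_upperTriangular a b c u⟩

theorem isConj_zero_row_iff [IsLocalRing R] {a a' b b' : R} :
    IsConj !![a, b; 0, 0] !![a', b'; 0, 0] ↔
      a = a' ∧ ∃ u : R, IsUnit u ∧ b' - u * b ∈ Ideal.span {a} := by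
  constructor
  · intro h
    obtain rfl : a = a' := by simpa [trace_fin_two] using h.trace_eq
    exact ⟨rfl, h.exists_isUnit_sub_mul_mem_span⟩
  · rintro ⟨rfl, u, hu, h⟩
    exact isConj_of_sub_mul_mem_span hu h

end ZeroSecondRow

theorem conjugate_M_iff_general (R : Type*) [CommRing R] [IsLocalRing R] (a a' b b' : R) :
    (∃ P : (Matrix (Fin 2) (Fin 2) R)ˣ,
        !![a', b'; 0, 0] =
          (P : Matrix (Fin 2) (Fin 2) R) * !![a, b; 0, 0] *
            ((P⁻¹ : _) : Matrix (Fin 2) (Fin 2) R)) ↔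
      a = a' ∧ ∃ u : R, IsUnit u ∧ b' - u * b ∈ Ideal.span {a} := by
  rw [← isConj_iff_exists_eq_mul_mul_inv, isConj_zero_row_iff]

/-- Over a finite commutative local principal ring, `M(a,b)` and `M(a',b')` are conjugate
under `GL₂(R)` iff `a = a'` and `b' - u * b ∈ (a)` for some unit `u`. -/
theorem conjugate_M_iff (R : Type*) [CommRing R] [Finite R] [IsLocalRing R]
    [IsPrincipalIdealRing R] (a a' b b' : R) :
    (∃ P : (Matrix (Fin 2) (Fin 2) R)ˣ,
        !![a', b'; 0, 0] =
          (P : Matrix (Fin 2) (Fin 2) R) * !![a, b; 0, 0] *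
            ((P⁻¹ : _) : Matrix (Fin 2) (Fin 2) R)) ↔
      a = a' ∧ ∃ u : R, IsUnit u ∧ b' - u * b ∈ Ideal.span {a} :=
  conjugate_M_iff_general R a a' b b'
end

section
/- Let R be a finite commutative local principal ring. A matrix A ∈ M₂(R) is a product of two idempotent matrices if and only if A = I or A is conjugate under GL₂(R) to a matrix M(a,b) with first row (a,b) and zero second row, for some a, b ∈ R. -/
/-!
An idempotent `E ≠ 1` over a local ring kills, from the left, a row of `1 - E` having a unit
entry (a nonzero idempotent matrix cannot have all its entries in the maximal ideal). Completing
that row `v` to an invertible matrix `Q` with second row `v`, the conjugate `Q (E₁ E₂) Q⁻¹` has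
zero second row as soon as `v ᵥ* E₁ = 0`. Conversely, in a local principal ideal ring `a ∣ b` or
`b ∣ a`, and `!![a, b; 0, 0]` is then an explicit product of two rank-one idempotents.
-/

open Matrix IsLocalRing

section dvd

variable {R : Type*} [CommRing R] [IsLocalRing R] [IsBezout R]

/-- If `g = gcd a b = r a + s b` with `a = g x`, `b = g y`, then `g (1 - r x - s y) = 0`; in a
local ring either `1 - r x - s y` is a unit, forcing `g = 0`, or one of `x`, `y` is a unit. -/
theorem dvd_total_of_isLocalRing (a b : R) : a ∣ b ∨ b ∣ a := by
  obtain ⟨x, hx⟩ := IsBezout.gcd_dvd_left a b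
  obtain ⟨y, hy⟩ := IsBezout.gcd_dvd_right a b
  obtain ⟨r, s, hg⟩ := IsBezout.gcd_eq_sum a b
  set g := IsBezout.gcd a b
  rcases isUnit_or_isUnit_of_add_one (a := r * x + s * y) (b := 1 - r * x - s * y) (by ring)
    with hu | hu
  · rcases isUnit_or_isUnit_of_isUnit_add hu with hrx | hsy
    · left
      rw [hx, (isUnit_of_mul_isUnit_right hrx).mul_right_dvd, hy]
      exact dvd_mul_right g y
    · right
      rw [hy, (isUnit_of_mul_isUnit_right hsy).mul_right_dvd, hx]
      exact dvd_mul_right g x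
  · have hg0 : g = 0 := by
      apply hu.mul_left_eq_zero.mp
      linear_combination r * hx + s * hy - hg
    simp [hx, hy, hg0]

end dvd

theorem IsIdempotentElem.units_conj {M : Type*} [Monoid M] {e : M} (he : IsIdempotentElem e)
    (u : Mˣ) : IsIdempotentElem (u * e * ↑u⁻¹) := by
  simp only [IsIdempotentElem, mul_assoc, Units.inv_mul_cancel_left, he.mul_self_mul]

namespace Matrix

section

variable {n R : Type*} [Fintype n] [DecidableEq n] [CommRing R] [IsLocalRing R]

theorem isUnit_one_sub_of_forall_mem_maximalIdeal {M : Matrix n n R}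
    (hM : ∀ i j, M i j ∈ maximalIdeal R) : IsUnit (1 - M) := by
  have hres : (residue R).mapMatrix M = 0 := by
    ext i j
    exact (residue_eq_zero_iff _).mpr (hM i j)
  rw [isUnit_iff_isUnit_det, ← residue_ne_zero_iff_isUnit, RingHom.map_det, map_sub, map_one,
    hres, sub_zero, det_one]
  exact one_ne_zero

theorem exists_isUnit_apply_of_isIdempotentElem {E : Matrix n n R} (hE : IsIdempotentElem E)
    (h0 : E ≠ 0) : ∃ i j, IsUnit (E i j) := by
  by_contra! h
  exact h0 ((isUnit_one_sub_of_forall_mem_maximalIdeal h).mul_left_eq_zero.mp hE.mul_one_sub_self)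

theorem exists_vecMul_eq_zero_of_isIdempotentElem {E : Matrix n n R} (hE : IsIdempotentElem E)
    (h1 : E ≠ 1) : ∃ v : n → R, (∃ j, IsUnit (v j)) ∧ v ᵥ* E = 0 := by
  obtain ⟨i, j, hij⟩ :=
    exists_isUnit_apply_of_isIdempotentElem hE.one_sub (sub_ne_zero.mpr h1.symm)
  exact ⟨(1 - E) i, ⟨j, hij⟩, congrFun hE.one_sub_mul_self i⟩

end

section

variable {R : Type*} [CommRing R]

theorem exists_unit_row_one_eq {v : Fin 2 → R} (hv : ∃ j, IsUnit (v j)) :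
    ∃ Q : (Matrix (Fin 2) (Fin 2) R)ˣ, (Q : Matrix (Fin 2) (Fin 2) R) 1 = v := by
  suffices ∃ Q : Matrix (Fin 2) (Fin 2) R, IsUnit Q.det ∧ Q 1 = v by
    obtain ⟨Q, hQ, rfl⟩ := this
    obtain ⟨u, hu⟩ := (isUnit_iff_isUnit_det Q).mpr hQ
    exact ⟨u, by rw [hu]⟩
  obtain ⟨j, hj⟩ := hv
  fin_cases j
  · refine ⟨!![0, 1; v 0, v 1], by simpa [det_fin_two] using hj, ?_⟩
    ext k; fin_cases k <;> rfl
  · refine ⟨!![1, 0; v 0, v 1], by simpa [det_fin_two] using hj, ?_⟩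
    ext k; fin_cases k <;> rfl

theorem exists_conj_eq_of_vecMul_eq_zero {A : Matrix (Fin 2) (Fin 2) R} {v : Fin 2 → R}
    (hv : ∃ j, IsUnit (v j)) (hA : v ᵥ* A = 0) :
    ∃ (a b : R) (P : (Matrix (Fin 2) (Fin 2) R)ˣ),
      A = (P : Matrix (Fin 2) (Fin 2) R) * !![a, b; 0, 0] *
        ((P⁻¹ : _) : Matrix (Fin 2) (Fin 2) R) := by
  obtain ⟨Q, hQ⟩ := exists_unit_row_one_eq hv
  set N : Matrix (Fin 2) (Fin 2) R := Q * A * ((Q⁻¹ : _) : Matrix (Fin 2) (Fin 2) R)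
  have hN : N 1 = 0 := by
    simp only [N, mul_apply_eq_vecMul, hQ, hA, zero_vecMul]
  refine ⟨N 0 0, N 0 1, Q⁻¹, ?_⟩
  have hN_eq : !![N 0 0, N 0 1; 0, 0] = N := by
    ext i j; fin_cases i <;> fin_cases j <;> simp [congrFun hN]
  rw [inv_inv, hN_eq]
  simp only [N, mul_assoc, Units.inv_mul_cancel_left, Units.inv_mul, mul_one]

/-- `E₂ = u vᵀ` is idempotent when `vᵀ u = 1`, and `!![1, x; 0, 0] * E₂` has first row
`(u₀ + x u₁) vᵀ`; take `v = (1, t)` when `b = a t` and `v = (r, 1)` when `a = b r`. -/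
theorem exists_isIdempotentElem_mul_eq_of_dvd_or_dvd {a b : R} (h : a ∣ b ∨ b ∣ a) :
    ∃ E₁ E₂ : Matrix (Fin 2) (Fin 2) R,
      IsIdempotentElem E₁ ∧ IsIdempotentElem E₂ ∧ !![a, b; 0, 0] = E₁ * E₂ := by
  rcases h with ⟨t, rfl⟩ | ⟨r, rfl⟩
  · refine ⟨!![1, a - 1 + t; 0, 0], !![1 - t, (1 - t) * t; 1, t], ?_, ?_, ?_⟩
    all_goals
      simp only [IsIdempotentElem, mul_fin_two]
      ext i j; fin_cases i <;> fin_cases j <;> simp <;> ring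
  · refine ⟨!![1, b; 0, 0], !![0, 0; r, 1], ?_, ?_, ?_⟩
    all_goals
      simp only [IsIdempotentElem, mul_fin_two]
      ext i j; fin_cases i <;> fin_cases j <;> simp

end

end Matrix

theorem product_of_two_idempotents_iff_general (R : Type*) [CommRing R] [IsLocalRing R]
    [IsPrincipalIdealRing R] (A : Matrix (Fin 2) (Fin 2) R) :
    (∃ E₁ E₂ : Matrix (Fin 2) (Fin 2) R,
        IsIdempotentElem E₁ ∧ IsIdempotentElem E₂ ∧ A = E₁ * E₂) ↔
      (A = 1 ∨ ∃ (a b : R) (P : (Matrix (Fin 2) (Fin 2) R)ˣ),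
        A = (P : Matrix (Fin 2) (Fin 2) R) * !![a, b; 0, 0] *
          ((P⁻¹ : _) : Matrix (Fin 2) (Fin 2) R)) := by
  constructor
  · rintro ⟨E₁, E₂, h₁, h₂, rfl⟩
    by_cases hE₁ : E₁ = 1
    · subst hE₁
      by_cases hE₂ : E₂ = 1
      · simp [hE₂]
      obtain ⟨v, hv, hvE⟩ := exists_vecMul_eq_zero_of_isIdempotentElem h₂ hE₂
      exact .inr (exists_conj_eq_of_vecMul_eq_zero hv (by rwa [one_mul]))
    obtain ⟨v, hv, hvE⟩ := exists_vecMul_eq_zero_of_isIdempotentElem h₁ hE₁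
    exact .inr (exists_conj_eq_of_vecMul_eq_zero hv (by rw [← vecMul_vecMul, hvE, zero_vecMul]))
  · rintro (rfl | ⟨a, b, P, rfl⟩)
    · exact ⟨1, 1, .one, .one, (one_mul 1).symm⟩
    obtain ⟨E₁, E₂, h₁, h₂, hM⟩ :=
      exists_isIdempotentElem_mul_eq_of_dvd_or_dvd (dvd_total_of_isLocalRing a b)
    refine ⟨_, _, h₁.units_conj P, h₂.units_conj P, ?_⟩
    simp only [hM, mul_assoc, Units.inv_mul_cancel_left]

/-- Over a finite commutative local principal ring, `A ∈ M₂(R)` is a product of two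
idempotent matrices iff `A = I` or `A` is `GL₂(R)`-conjugate to some `M(a,b)`. -/
theorem product_of_two_idempotents_iff (R : Type*) [CommRing R] [Finite R] [IsLocalRing R]
    [IsPrincipalIdealRing R] (A : Matrix (Fin 2) (Fin 2) R) :
    (∃ E₁ E₂ : Matrix (Fin 2) (Fin 2) R,
        IsIdempotentElem E₁ ∧ IsIdempotentElem E₂ ∧ A = E₁ * E₂) ↔
      (A = 1 ∨ ∃ (a b : R) (P : (Matrix (Fin 2) (Fin 2) R)ˣ),
        A = (P : Matrix (Fin 2) (Fin 2) R) * !![a, b; 0, 0] *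
          ((P⁻¹ : _) : Matrix (Fin 2) (Fin 2) R)) :=
  product_of_two_idempotents_iff_general R A
end

section
/- Let R be a finite commutative local principal ring and let a, b ∈ R with a ∈ J(R)^l \ J(R)^{l+1}, b ∈ J(R)^k \ J(R)^{k+1}, and l ≥ k, where J(R) = (x). Writing b = u x^k and a = v x^l with u, v units, the matrix F with rows (a, b) and (u⁻¹v(1−a)x^{l−k}, 1−a) is idempotent and M(a,b) = E₁₁ · F, where E₁₁ is the matrix unit with 1 in position (1,1). In particular, M(a,b) is a product of two idempotent matrices in M₂(R). -/
/-- Over a finite commutative local principal ring with `J(R) = (x)`, if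
`a ∈ J(R)^l \ J(R)^(l+1)`, `b ∈ J(R)^k \ J(R)^(k+1)` with `l ≥ k`, and `a = v x^l`,
`b = u x^k` with `u, v` units, then `F = !![a, b; u⁻¹ v (1-a) x^(l-k), 1-a]` is idempotent
and `M(a,b) = E₁₁ * F`; in particular `M(a,b)` is a product of two idempotents. -/
theorem M_eq_E11_mul_idempotent (R : Type*) [CommRing R] [Finite R] [IsLocalRing R]
    [IsPrincipalIdealRing R] (x a b : R) (u v : Rˣ) (k l : ℕ) (hkl : k ≤ l)
    (hx : IsLocalRing.maximalIdeal R = Ideal.span {x})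
    (ha : a ∈ (IsLocalRing.maximalIdeal R) ^ l ∧ a ∉ (IsLocalRing.maximalIdeal R) ^ (l + 1))
    (hb : b ∈ (IsLocalRing.maximalIdeal R) ^ k ∧ b ∉ (IsLocalRing.maximalIdeal R) ^ (k + 1))
    (hav : a = (v : R) * x ^ l) (hbu : b = (u : R) * x ^ k) :
    IsIdempotentElem !![a, b; ((u⁻¹ : Rˣ) : R) * (v : R) * (1 - a) * x ^ (l - k), 1 - a] ∧
    !![a, b; 0, 0] =
      !![1, 0; 0, 0] * !![a, b; ((u⁻¹ : Rˣ) : R) * (v : R) * (1 - a) * x ^ (l - k), 1 - a] ∧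
    ∃ E₁ E₂ : Matrix (Fin 2) (Fin 2) R,
      IsIdempotentElem E₁ ∧ IsIdempotentElem E₂ ∧ !![a, b; 0, 0] = E₁ * E₂ := by
  obtain ⟨c, hc⟩ : ∃ c : R, c = ((u⁻¹ : Rˣ) : R) * (v : R) * (1 - a) * x ^ (l - k) := ⟨_, rfl⟩
  rw [← hc]
  have hxp : x ^ k * x ^ (l - k) = x ^ l := by
    rw [← pow_add]; congr 1; omega
  have huu : (u : R) * ((u⁻¹ : Rˣ) : R) = 1 := by
    rw [← Units.val_mul, mul_inv_cancel, Units.val_one]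
  have hbc : b * c = a - a * a := by
    rw [hbu, hc]
    calc (u : R) * x ^ k * (((u⁻¹ : Rˣ) : R) * (v : R) * (1 - a) * x ^ (l - k))
        = ((u : R) * ((u⁻¹ : Rˣ) : R)) * ((v : R) * (1 - a) * (x ^ k * x ^ (l - k))) := by ring
      _ = (v : R) * x ^ l * (1 - a) := by rw [huu, hxp]; ring
      _ = a - a * a := by rw [← hav]; ring
  have hidem : IsIdempotentElem !![a, b; c, 1 - a] := by
    unfold IsIdempotentElem
    ext i j
    fin_cases i <;> fin_cases j <;>
      simp [Matrix.mul_apply, Fin.sum_univ_two] <;> first | ring1 | linear_combination hbc | linear_combination -hbc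
  have heq : !![a, b; 0, 0] = !![1, 0; 0, 0] * !![a, b; c, 1 - a] := by
    ext i j
    fin_cases i <;> fin_cases j <;> simp [Matrix.mul_apply, Fin.sum_univ_two]
  refine ⟨hidem, heq, !![1, 0; 0, 0], _, ?_, hidem, heq⟩
  unfold IsIdempotentElem
  ext i j
  fin_cases i <;> fin_cases j <;> simp [Matrix.mul_apply, Fin.sum_univ_two]
end

section
/- Let R be a finite commutative local principal ring. Any matrix A ∈ M₂(R) that is a product of finitely many idempotent matrices is already a product of two idempotent matrices. -/
/-!
Over a local ring, an idempotent `E ≠ 1` has a unit entry in `1 - E`: otherwise `E ≡ 1` modulo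
the maximal ideal, so `det E` is a unit and `E = 1`. The column and the row of `1 - E` through
that entry are unimodular vectors killed by `E` on the right and on the left, since
`E (1 - E) = 0 = (1 - E) E`. Such annihilation passes to products, so a product of idempotents is
either `1` or kills a unimodular vector on each side.

In size two this forces `A = a • w rᵀ` with `w`, `r` unimodular, and then `A = (w pᵀ) (q rᵀ)` is a
product of two idempotents as soon as `p ⬝ w = 1 = q ⬝ r` and `p ⬝ q = a`. Along the lines
`p = p₀ + x • perp w`, `q = q₀ + y • perp r` the product `p ⬝ q` is `c₀ + c₁ x + c₂ y + c₃ x y` with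
`c₀ c₃ - c₁ c₂ = (p₀ ⬝ w) (q₀ ⬝ r) = 1`, so `c₁` or `c₃` is a unit and every `a` is attained.
-/

open Matrix

section Semiring

variable {R : Type*} [Semiring R] {n : Type*} [Fintype n]

theorem isIdempotentElem_vecMulVec {w p : n → R} (h : p ⬝ᵥ w = 1) :
    IsIdempotentElem (vecMulVec w p) := by
  rw [IsIdempotentElem, vecMulVec_mul_vecMulVec, h, one_smul]

def AnnihilatesUnimodular (A : Matrix n n R) : Prop :=
  (∃ u s : n → R, s ⬝ᵥ u = 1 ∧ A *ᵥ u = 0) ∧ ∃ v t : n → R, v ⬝ᵥ t = 1 ∧ v ᵥ* A = 0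

theorem AnnihilatesUnimodular.mul {A B : Matrix n n R} (hA : AnnihilatesUnimodular A)
    (hB : AnnihilatesUnimodular B) : AnnihilatesUnimodular (A * B) := by
  obtain ⟨u, s, hsu, hBu⟩ := hB.1
  obtain ⟨v, t, hvt, hvA⟩ := hA.2
  exact ⟨⟨u, s, hsu, by rw [← mulVec_mulVec, hBu, mulVec_zero]⟩,
    ⟨v, t, hvt, by rw [← vecMul_vecMul, hvA, zero_vecMul]⟩⟩

end Semiring

section Perp

variable {R : Type*} [CommRing R]

def perp (v : Fin 2 → R) : Fin 2 → R := ![-v 1, v 0]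

theorem perp_dotProduct_self (v : Fin 2 → R) : perp v ⬝ᵥ v = 0 := by
  simp only [perp, dotProduct, Fin.sum_univ_two, cons_val_zero, cons_val_one]
  ring

theorem perp_dotProduct_perp (v w : Fin 2 → R) : perp v ⬝ᵥ perp w = v ⬝ᵥ w := by
  simp only [perp, dotProduct, Fin.sum_univ_two, cons_val_zero, cons_val_one]
  ring

theorem dotProduct_mul_dotProduct_eq_sub (p w q r : Fin 2 → R) :
    (p ⬝ᵥ w) * (q ⬝ᵥ r) =
      (p ⬝ᵥ q) * (perp w ⬝ᵥ perp r) - (perp w ⬝ᵥ q) * (p ⬝ᵥ perp r) := by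
  simp only [perp, dotProduct, Fin.sum_univ_two, cons_val_zero, cons_val_one]
  ring

theorem vecMulVec_add_vecMulVec_perp {u s : Fin 2 → R} (h : s ⬝ᵥ u = 1) :
    vecMulVec u s + vecMulVec (perp s) (perp u) = 1 := by
  simp only [dotProduct, Fin.sum_univ_two] at h
  ext i j
  fin_cases i <;> fin_cases j <;>
    simp only [perp, Matrix.add_apply, vecMulVec_apply, one_fin_two, of_apply, cons_val', cons_val_zero,
      cons_val_one, empty_val', cons_val_fin_one, Fin.zero_eta, Fin.mk_one]
  all_goals first | linear_combination h | ring

theorem eq_smul_vecMulVec_perp {A : Matrix (Fin 2) (Fin 2) R} {u s v t : Fin 2 → R}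
    (hsu : s ⬝ᵥ u = 1) (hAu : A *ᵥ u = 0) (hvt : v ⬝ᵥ t = 1) (hvA : v ᵥ* A = 0) :
    A = ((perp t ᵥ* A) ⬝ᵥ perp s) • vecMulVec (perp v) (perp u) :=
  calc A = (vecMulVec t v + vecMulVec (perp v) (perp t)) * A *
        (vecMulVec u s + vecMulVec (perp s) (perp u)) := by
          rw [vecMulVec_add_vecMulVec_perp hvt, vecMulVec_add_vecMulVec_perp hsu, one_mul, mul_one]
    _ = vecMulVec (perp v) (perp t ᵥ* A) * (vecMulVec u s + vecMulVec (perp s) (perp u)) := by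
          rw [add_mul (vecMulVec t v), vecMulVec_mul, vecMulVec_mul, hvA, vecMulVec_zero, zero_add]
    _ = _ := by
          rw [mul_add, vecMulVec_mul_vecMulVec, vecMulVec_mul_vecMulVec, ← dotProduct_mulVec, hAu,
            dotProduct_zero, zero_smul, vecMulVec_zero, zero_add, vecMulVec_smul]

end Perp

namespace IsLocalRing

variable {R : Type*} [CommRing R] [IsLocalRing R]

theorem exists_add_mul_add_mul_add_mul_mul_eq {c₀ c₁ c₂ c₃ : R} (h : c₀ * c₃ - c₁ * c₂ = 1)
    (a : R) : ∃ x y, c₀ + c₁ * x + c₂ * y + c₃ * x * y = a := by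
  rcases isUnit_or_isUnit_of_add_one (a := c₀ * c₃) (b := c₁ * -c₂) (by rw [← h]; ring)
    with h₀₃ | h₁₂
  · obtain ⟨d, hd⟩ := (isUnit_of_mul_isUnit_right h₀₃).exists_right_inv
    exact ⟨a - d - c₂ * d, d - c₁ * d, by
      linear_combination ((a - d - c₂ * d) * (1 - c₁) - c₀) * hd + d * h⟩
  · obtain ⟨d, hd⟩ := (isUnit_of_mul_isUnit_left h₁₂).exists_right_inv
    exact ⟨(a - c₀) * d, 0, by linear_combination (a - c₀) * hd⟩

theorem exists_dotProduct_eq {w r p₀ q₀ : Fin 2 → R} (hw : p₀ ⬝ᵥ w = 1) (hr : q₀ ⬝ᵥ r = 1)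
    (a : R) : ∃ p q : Fin 2 → R, p ⬝ᵥ w = 1 ∧ q ⬝ᵥ r = 1 ∧ p ⬝ᵥ q = a := by
  have hdet : (p₀ ⬝ᵥ q₀) * (perp w ⬝ᵥ perp r) - (perp w ⬝ᵥ q₀) * (p₀ ⬝ᵥ perp r) = 1 := by
    rw [← dotProduct_mul_dotProduct_eq_sub, hw, hr, one_mul]
  obtain ⟨x, y, hxy⟩ := exists_add_mul_add_mul_add_mul_mul_eq hdet a
  refine ⟨p₀ + x • perp w, q₀ + y • perp r, ?_, ?_, ?_⟩
  · rw [add_dotProduct, smul_dotProduct, perp_dotProduct_self, smul_zero, hw, add_zero]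
  · rw [add_dotProduct, smul_dotProduct, perp_dotProduct_self, smul_zero, hr, add_zero]
  · simp only [add_dotProduct, dotProduct_add, smul_dotProduct, dotProduct_smul, smul_eq_mul]
    linear_combination hxy

theorem exists_isIdempotentElem_mul_eq_of_annihilatesUnimodular
    {A : Matrix (Fin 2) (Fin 2) R} (hA : AnnihilatesUnimodular A) :
    ∃ E₁ E₂ : Matrix (Fin 2) (Fin 2) R,
      IsIdempotentElem E₁ ∧ IsIdempotentElem E₂ ∧ A = E₁ * E₂ := by
  obtain ⟨⟨u, s, hsu, hAu⟩, v, t, hvt, hvA⟩ := hA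
  obtain ⟨p, q, hp, hq, hpq⟩ := exists_dotProduct_eq (w := perp v) (r := perp u)
    (by rw [perp_dotProduct_perp, dotProduct_comm, hvt]) (by rw [perp_dotProduct_perp, hsu])
    ((perp t ᵥ* A) ⬝ᵥ perp s)
  refine ⟨vecMulVec (perp v) p, vecMulVec q (perp u), isIdempotentElem_vecMulVec hp,
    isIdempotentElem_vecMulVec (by rwa [dotProduct_comm]), ?_⟩
  rw [vecMulVec_mul_vecMulVec, hpq, vecMulVec_smul]
  exact eq_smul_vecMulVec_perp hsu hAu hvt hvA

variable {n : Type*} [Fintype n] [DecidableEq n]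

theorem exists_isUnit_one_sub_apply {E : Matrix n n R} (hE : IsIdempotentElem E) (hE1 : E ≠ 1) :
    ∃ i j, IsUnit ((1 - E) i j) := by
  by_contra! h
  have hres : (residue R).mapMatrix (1 - E) = 0 := by
    ext i j
    exact (residue_eq_zero_iff _).2 (h i j)
  rw [map_sub, map_one, sub_eq_zero] at hres
  have hdet : IsUnit E.det := by
    rw [← residue_ne_zero_iff_isUnit, RingHom.map_det, ← hres, det_one]
    exact one_ne_zero
  exact hE1 ((IsIdempotentElem.iff_eq_one_of_isUnit ((isUnit_iff_isUnit_det E).2 hdet)).1 hE)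

theorem annihilatesUnimodular_of_isIdempotentElem {E : Matrix n n R} (hE : IsIdempotentElem E)
    (hE1 : E ≠ 1) : AnnihilatesUnimodular E := by
  obtain ⟨i, j, c, hc⟩ := exists_isUnit_one_sub_apply hE hE1
  refine ⟨⟨(1 - E) *ᵥ Pi.single j 1, Pi.single i ↑c⁻¹, ?_, ?_⟩,
    ⟨Pi.single i 1 ᵥ* (1 - E), Pi.single j ↑c⁻¹, ?_, ?_⟩⟩
  · rw [single_dotProduct, mulVec_single_one, col_apply, ← hc, Units.inv_mul]
  · rw [mulVec_mulVec, hE.mul_one_sub_self, zero_mulVec]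
  · rw [dotProduct_single, single_one_vecMul, row_apply, ← hc, Units.mul_inv]
  · rw [vecMul_vecMul, hE.one_sub_mul_self, vecMul_zero]

theorem eq_one_or_annihilatesUnimodular_list_prod {l : List (Matrix n n R)}
    (hl : ∀ E ∈ l, IsIdempotentElem E) : l.prod = 1 ∨ AnnihilatesUnimodular l.prod := by
  refine List.prod_induction (fun A ↦ A = 1 ∨ AnnihilatesUnimodular A) ?_ (Or.inl rfl) fun E hE ↦
    (em (E = 1)).imp_right (annihilatesUnimodular_of_isIdempotentElem (hl E hE))
  rintro A B (rfl | hA) (rfl | hB)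
  · exact Or.inl (one_mul 1)
  · exact Or.inr ((one_mul B).symm ▸ hB)
  · exact Or.inr ((mul_one A).symm ▸ hA)
  · exact Or.inr (hA.mul hB)

end IsLocalRing

theorem matrix_prod_idempotents_imp_two_general (R : Type*) [CommRing R]
    [IsLocalRing R] (A : Matrix (Fin 2) (Fin 2) R)
    (h : ∃ l : List (Matrix (Fin 2) (Fin 2) R),
      l ≠ [] ∧ (∀ E ∈ l, IsIdempotentElem E) ∧ A = l.prod) :
    ∃ E₁ E₂ : Matrix (Fin 2) (Fin 2) R,
      IsIdempotentElem E₁ ∧ IsIdempotentElem E₂ ∧ A = E₁ * E₂ := by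
  obtain ⟨l, -, hl, rfl⟩ := h
  rcases IsLocalRing.eq_one_or_annihilatesUnimodular_list_prod hl with h1 | hA
  · exact ⟨1, 1, .one, .one, by rw [h1, mul_one]⟩
  · exact IsLocalRing.exists_isIdempotentElem_mul_eq_of_annihilatesUnimodular hA

/-- Over a finite commutative local principal ring, any 2×2 matrix that is a product of
finitely many idempotent matrices is already a product of two idempotent matrices. -/
theorem matrix_prod_idempotents_imp_two (R : Type*) [CommRing R] [Finite R]
    [IsLocalRing R] [IsPrincipalIdealRing R] (A : Matrix (Fin 2) (Fin 2) R)
    (h : ∃ l : List (Matrix (Fin 2) (Fin 2) R),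
      l ≠ [] ∧ (∀ E ∈ l, IsIdempotentElem E) ∧ A = l.prod) :
    ∃ E₁ E₂ : Matrix (Fin 2) (Fin 2) R,
      IsIdempotentElem E₁ ∧ IsIdempotentElem E₂ ∧ A = E₁ * E₂ :=
  matrix_prod_idempotents_imp_two_general R A h
end

section
/- Let R be a finite commutative local principal ring of cardinality q^n with R/J(R) ≅ GF(q). Let b ∈ J(R)^k \ J(R)^{k+1} with b ≠ 0. Then the conjugacy orbit under GL₂(R) of the matrix M(0,b) (first row (0,b), second row zero) has exactly q^{2(n−k−1)}(q²−1) elements. -/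
open IsLocalRing

section Helpers

/-- Counting via constant fiber sizes. -/
theorem auxCardFiberConst {α β : Type*} [Finite α] [Finite β] (f : α → β) (c : ℕ)
    (h : ∀ b : β, Nat.card {a : α // f a = b} = c) : Nat.card α = c * Nat.card β := by
  classical
  cases nonempty_fintype α
  cases nonempty_fintype β
  rw [← Nat.card_congr (Equiv.sigmaFiberEquiv f), Nat.card_eq_fintype_card,
    Fintype.card_sigma]
  have h' : ∀ b : β, Fintype.card {a : α // f a = b} = c := fun b => by
    rw [← Nat.card_eq_fintype_card]; exact h b
  simp only [h', Finset.sum_const, Finset.card_univ, smul_eq_mul,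
    Nat.card_eq_fintype_card, mul_comm]

/-- Units of a monoid are in bijection with the subtype of unit elements. -/
noncomputable def auxUnitsEquiv (M : Type*) [Monoid M] : Mˣ ≃ {x : M // IsUnit x} where
  toFun u := ⟨u, u.isUnit⟩
  invFun x := x.2.unit
  left_inv u := Units.ext u.isUnit.unit_spec
  right_inv x := Subtype.ext x.2.unit_spec

/-- Lagrange for ideals. -/
theorem auxCardIdeal {R : Type*} [CommRing R] [Finite R] (I : Ideal R) :
    Nat.card R = Nat.card I * Nat.card (R ⧸ I) := by
  have : Finite (R ⧸ I) := Finite.of_surjective _ Ideal.Quotient.mk_surjective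
  apply auxCardFiberConst (Ideal.Quotient.mk I)
  intro z
  obtain ⟨x₀, hx₀⟩ := Ideal.Quotient.mk_surjective z
  refine Nat.card_congr ?_
  refine ⟨fun a => ⟨a.1 - x₀, ?_⟩, fun t => ⟨x₀ + t.1, ?_⟩, fun a => ?_, fun t => ?_⟩
  · rw [← Ideal.Quotient.eq_zero_iff_mem, map_sub, a.2, hx₀, sub_self]
  · rw [map_add, hx₀, Ideal.Quotient.eq_zero_iff_mem.2 t.2, add_zero]
  · ext; simp
  · ext; simp

end Helpers

section Chain

variable {R : Type*} [CommRing R] [Finite R] [IsLocalRing R]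
  (π : R) (hπ : maximalIdeal R = Ideal.span {π})
  (e : ℕ) (he : π ^ e = 0) (hemin : ∀ t, t < e → π ^ t ≠ 0)

include hπ he hemin

theorem auxPowEq (i : ℕ) : (maximalIdeal R) ^ i = Ideal.span {π ^ i} := by
  rw [hπ, Ideal.span_singleton_pow]

/-- Every nonzero element is a unit times a power of the uniformizer. -/
theorem auxVal (x : R) (hx : x ≠ 0) : ∃ (u : Rˣ) (j : ℕ), j < e ∧ x = ↑u * π ^ j := by
  classical
  have hex : ∃ t, x ∉ (maximalIdeal R) ^ t := by
    refine ⟨e, ?_⟩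
    rw [auxPowEq π hπ e he hemin, he]
    simp only [Ideal.span_singleton_eq_bot.mpr rfl, Ideal.mem_bot]
    exact hx
  let F := Nat.find hex
  have hF0 : F ≠ 0 := by
    intro h0
    have := Nat.find_spec hex
    rw [show F = Nat.find hex from rfl] at h0
    rw [h0] at this
    exact this (by simp)
  obtain ⟨j, hj⟩ : ∃ j, F = j + 1 := ⟨F - 1, (Nat.succ_pred_eq_of_pos (Nat.pos_of_ne_zero hF0)).symm⟩
  have hmem : x ∈ (maximalIdeal R) ^ j := by
    by_contra hc
    exact absurd hj (by have := Nat.find_min' hex hc; omega)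
  have hnmem : x ∉ (maximalIdeal R) ^ (j + 1) := by
    rw [← hj]; exact Nat.find_spec hex
  rw [auxPowEq π hπ e he hemin] at hmem
  obtain ⟨c, hc⟩ := Ideal.mem_span_singleton'.1 hmem
  have hcu : IsUnit c := by
    by_contra hcu
    apply hnmem
    rw [auxPowEq π hπ e he hemin]
    have : c ∈ maximalIdeal R := (mem_maximalIdeal c).2 (mem_nonunits_iff.2 hcu)
    rw [hπ, Ideal.mem_span_singleton] at this
    obtain ⟨d, hd⟩ := this
    exact Ideal.mem_span_singleton'.2 ⟨d, by rw [← hc, hd]; ring⟩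
  have hje : j < e := by
    by_contra hje
    push_neg at hje
    apply hx
    rw [← hc]
    have : π ^ j = 0 := by
      obtain ⟨s, hs⟩ := Nat.exists_eq_add_of_le hje
      rw [hs, pow_add, he, zero_mul]
    rw [this, mul_zero]
  exact ⟨hcu.unit, j, hje, by rw [hcu.unit_spec, ← hc]⟩

/-- Annihilator of `π^i` is `m^(e-i)`. -/
theorem auxAnn (i : ℕ) (hi : i ≤ e) (x : R) :
    π ^ i * x = 0 ↔ x ∈ (maximalIdeal R) ^ (e - i) := by
  constructor
  · intro hx0
    rcases eq_or_ne x 0 with rfl | hx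
    · exact Ideal.zero_mem _
    obtain ⟨u, j, hj, rfl⟩ := auxVal π hπ e he hemin x hx
    have hpij : π ^ (i + j) = 0 := by
      have h2 : (↑u : R) * π ^ (i + j) = 0 := by
        calc (↑u : R) * π ^ (i + j) = π ^ i * (↑u * π ^ j) := by rw [pow_add]; ring
        _ = 0 := hx0
      exact (Units.mul_right_eq_zero u).1 h2
    have hij : e ≤ i + j := by
      by_contra hc
      exact hemin _ (by omega) hpij
    rw [auxPowEq π hπ e he hemin, Ideal.mem_span_singleton]
    exact Dvd.dvd.mul_left (pow_dvd_pow π (by omega)) _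
  · intro hx
    rw [auxPowEq π hπ e he hemin] at hx
    obtain ⟨c, hc⟩ := Ideal.mem_span_singleton'.1 hx
    rw [← hc, show π ^ i * (c * π ^ (e - i)) = c * π ^ (i + (e - i)) by ring,
      Nat.add_sub_cancel' hi, he, mul_zero]

/-- `π^i * t ∈ m^(i+1) ↔ t ∈ m` for `i < e`. -/
theorem auxStepMem (i : ℕ) (hi : i < e) (t : R) :
    π ^ i * t ∈ (maximalIdeal R) ^ (i + 1) ↔ t ∈ maximalIdeal R := by
  constructor
  · intro h
    rw [auxPowEq π hπ e he hemin] at h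
    obtain ⟨c, hc⟩ := Ideal.mem_span_singleton'.1 h
    have : π ^ i * (t - c * π) = 0 := by
      rw [mul_sub, ← hc]; ring
    have hmem := (auxAnn π hπ e he hemin i (le_of_lt hi) _).1 this
    have hle : (maximalIdeal R) ^ (e - i) ≤ maximalIdeal R :=
      Ideal.pow_le_self (by omega)
    have h1 : t - c * π ∈ maximalIdeal R := hle hmem
    have h2 : c * π ∈ maximalIdeal R := by
      rw [hπ]; exact Ideal.mem_span_singleton'.2 ⟨c, rfl⟩
    have := Ideal.add_mem _ h1 h2
    simpa using this
  · intro h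
    rw [hπ, Ideal.mem_span_singleton] at h
    obtain ⟨d, hd⟩ := h
    rw [auxPowEq π hπ e he hemin, Ideal.mem_span_singleton, hd]
    exact ⟨d, by ring⟩

end Chain

section Cards
variable {R : Type*} [CommRing R] [Finite R] [IsLocalRing R]
  (π : R) (hπ : maximalIdeal R = Ideal.span {π})
  (e : ℕ) (he : π ^ e = 0) (hemin : ∀ t, t < e → π ^ t ≠ 0)

include hπ he hemin in
theorem auxCardStep (q n : ℕ)
    (hcard : Nat.card R = q ^ n)
    (hres : Nat.card (R ⧸ maximalIdeal R) = q)
    (i : ℕ) (hi : i < e) :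
    Nat.card ↥((maximalIdeal R) ^ i) =
      q * Nat.card ↥((maximalIdeal R) ^ (i + 1)) := by
  have hc1 : Nat.card R = Nat.card (maximalIdeal R) * q := by
    rw [auxCardIdeal (maximalIdeal R), hres]
  have hmemf : ∀ (p : R × ↥((maximalIdeal R) ^ (i + 1))),
      π ^ i * p.1 + p.2.1 ∈ (maximalIdeal R) ^ i := by
    intro p
    refine Ideal.add_mem _ ?_ (Ideal.pow_le_pow_right (by omega) p.2.2)
    rw [auxPowEq π hπ e he hemin]
    exact Ideal.mem_span_singleton'.2 ⟨p.1, by ring⟩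
  have key : Nat.card (R × ↥((maximalIdeal R) ^ (i + 1))) =
      Nat.card (maximalIdeal R) * Nat.card ↥((maximalIdeal R) ^ i) := by
    refine auxCardFiberConst (fun p => ⟨π ^ i * p.1 + p.2.1, hmemf p⟩) _ ?_
    intro z
    have hz2 : (z : R) ∈ Ideal.span {π ^ i} := by
      rw [← auxPowEq π hπ e he hemin i]; exact z.2
    obtain ⟨x₀, hx₀⟩ := Ideal.mem_span_singleton'.1 hz2
    have hm1 : ∀ p : R × ↥((maximalIdeal R) ^ (i + 1)),
        (π ^ i * p.1 + p.2.1 = (z : R)) → p.1 - x₀ ∈ maximalIdeal R := by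
      intro p hp
      have h3 : π ^ i * (p.1 - x₀) = -p.2.1 := by
        rw [mul_sub, mul_comm (π ^ i) x₀, hx₀]; linear_combination hp
      exact (auxStepMem π hπ e he hemin i hi _).1 (by rw [h3]; exact neg_mem p.2.2)
    have hm2 : ∀ t : R, t ∈ maximalIdeal R →
        (z : R) - π ^ i * (x₀ + t) ∈ (maximalIdeal R) ^ (i + 1) := by
      intro t ht
      have h3 : (z : R) - π ^ i * (x₀ + t) = -(π ^ i * t) := by
        rw [mul_add, mul_comm (π ^ i) x₀, hx₀]; ring
      rw [h3]; exact neg_mem ((auxStepMem π hπ e he hemin i hi _).2 ht)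
    refine Nat.card_congr ⟨fun p => ⟨p.1.1 - x₀, hm1 p.1 (congrArg Subtype.val p.2)⟩,
      fun t => ⟨(x₀ + t.1, ⟨(z : R) - π ^ i * (x₀ + t.1), hm2 t.1 t.2⟩),
        Subtype.ext (by simp only; ring)⟩,
      fun p => ?_, fun t => Subtype.ext (by simp)⟩
    obtain ⟨⟨x, y⟩, hp⟩ := p
    have hfz : π ^ i * x + y.1 = (z : R) := congrArg Subtype.val hp
    refine Subtype.ext ?_
    simp only [Prod.mk.injEq]
    exact ⟨by ring, Subtype.ext (by simp only; linear_combination -hfz)⟩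
  rw [Nat.card_prod, hc1, mul_assoc] at key
  have hc1pos : 0 < Nat.card (maximalIdeal R) := Nat.card_pos
  exact (Nat.eq_of_mul_eq_mul_left hc1pos key).symm

include hπ he hemin in
theorem auxCardPow (q n : ℕ)
    (hq2 : 2 ≤ q)
    (hcard : Nat.card R = q ^ n)
    (hres : Nat.card (R ⧸ maximalIdeal R) = q) :
    e = n ∧ ∀ i ≤ e, Nat.card ↥((maximalIdeal R) ^ i) = q ^ (e - i) := by
  have hce : Nat.card ↥((maximalIdeal R) ^ e) = 1 := by
    have hbot : (maximalIdeal R) ^ e = ⊥ := by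
      rw [auxPowEq π hπ e he hemin, he, Ideal.span_singleton_eq_bot.mpr rfl]
    rw [hbot]
    exact Nat.card_unique
  have hdown : ∀ d, d ≤ e → Nat.card ↥((maximalIdeal R) ^ (e - d)) = q ^ d := by
    intro d
    induction d with
    | zero => intro _; simpa using hce
    | succ d ih =>
      intro hd
      have h1 : e - (d + 1) < e := by omega
      have h2 : e - (d + 1) + 1 = e - d := by omega
      rw [auxCardStep π hπ e he hemin q n hcard hres _ h1, h2, ih (by omega), pow_succ,
        mul_comm]
  have hc0 : Nat.card ↥((maximalIdeal R) ^ 0) = q ^ e := by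
    have := hdown e le_rfl
    simpa using this
  have hc0' : Nat.card ↥((maximalIdeal R) ^ 0) = q ^ n := by
    rw [pow_zero, Ideal.one_eq_top]
    rw [← hcard]
    exact Nat.card_congr Submodule.topEquiv.toEquiv
  have hen : e = n := Nat.pow_right_injective hq2 (hc0.symm.trans hc0')
  exact ⟨hen, fun i hi => by
    have := hdown (e - i) (by omega)
    rwa [show e - (e - i) = i by omega] at this⟩
end Cards

theorem auxCardGL (R : Type*) [CommRing R] [Finite R] [IsLocalRing R] :
    Nat.card (Matrix (Fin 2) (Fin 2) R)ˣ =
      Nat.card ↥(maximalIdeal R) ^ 4 *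
        ((Nat.card (R ⧸ maximalIdeal R) ^ 2 - 1) *
          (Nat.card (R ⧸ maximalIdeal R) ^ 2 - Nat.card (R ⧸ maximalIdeal R))) := by
  classical
  letI : Field (R ⧸ maximalIdeal R) := Ideal.Quotient.field _
  have : Finite (R ⧸ maximalIdeal R) := Finite.of_surjective _ Ideal.Quotient.mk_surjective
  letI : Fintype (R ⧸ maximalIdeal R) := Fintype.ofFinite _
  set mk := Ideal.Quotient.mk (maximalIdeal R) with hmk
  have hunit_iff : ∀ d : R, IsUnit d ↔ mk d ≠ 0 := by
    intro d
    rw [Ne, hmk, Ideal.Quotient.eq_zero_iff_mem]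
    exact ⟨fun h hm => (notMem_maximalIdeal.2 h) hm, fun h => notMem_maximalIdeal.1 h⟩
  have hkey : ∀ X : Matrix (Fin 2) (Fin 2) R, IsUnit X ↔ IsUnit (X.map mk) := by
    intro X
    have hdm : (X.map ⇑mk).det = mk X.det := by
      rw [← RingHom.mapMatrix_apply, ← RingHom.map_det]
    rw [Matrix.isUnit_iff_isUnit_det, Matrix.isUnit_iff_isUnit_det, hdm,
      isUnit_iff_ne_zero]
    exact hunit_iff X.det
  rw [Nat.card_congr (auxUnitsEquiv _)]
  have main : Nat.card {X : Matrix (Fin 2) (Fin 2) R // IsUnit X} =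
      Nat.card (Fin 2 → Fin 2 → ↥(maximalIdeal R)) *
        Nat.card {Y : Matrix (Fin 2) (Fin 2) (R ⧸ maximalIdeal R) // IsUnit Y} := by
    refine auxCardFiberConst (fun X => ⟨X.1.map mk, (hkey X.1).1 X.2⟩) _ ?_
    intro Y
    choose lift hlift using fun y : R ⧸ maximalIdeal R => Ideal.Quotient.mk_surjective y
    set X₀ : Matrix (Fin 2) (Fin 2) R := Matrix.of fun i j => lift (Y.1 i j) with hX₀
    have hmemfib : ∀ P : {X : Matrix (Fin 2) (Fin 2) R // IsUnit X},
        ((⟨P.1.map mk, (hkey P.1).1 P.2⟩ : {Y : Matrix (Fin 2) (Fin 2) (R ⧸ maximalIdeal R) // IsUnit Y}) = Y) →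
        ∀ i j, P.1 i j - X₀ i j ∈ maximalIdeal R := by
      intro P hP i j
      have hPv : P.1.map mk = Y.1 := congrArg Subtype.val hP
      have : mk (P.1 i j) = Y.1 i j := by rw [← hPv]; rfl
      rw [← Ideal.Quotient.eq_zero_iff_mem, map_sub, this, hX₀]
      simp [hlift]
    have hmap : ∀ t : Fin 2 → Fin 2 → ↥(maximalIdeal R),
        (X₀ + Matrix.of fun i j => (t i j : R)).map mk = Y.1 := by
      intro t
      ext i j
      simp only [Matrix.map_apply, Matrix.add_apply, map_add, Matrix.of_apply, hX₀]
      rw [Ideal.Quotient.eq_zero_iff_mem.2 (t i j).2, add_zero, hlift]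
    refine Nat.card_congr
      ⟨fun P => fun i j => ⟨P.1.1 i j - X₀ i j, hmemfib P.1 P.2 i j⟩,
       fun t => ⟨⟨X₀ + Matrix.of fun i j => (t i j : R), (hkey _).2 ((hmap t) ▸ Y.2)⟩,
         Subtype.ext (hmap t)⟩,
       fun P => ?_, fun t => ?_⟩
    · refine Subtype.ext (Subtype.ext ?_)
      ext i j
      simp
    · funext i j
      exact Subtype.ext (by simp)
  rw [main]
  congr 1
  · rw [Nat.card_fun, Nat.card_fun]
    simp only [Nat.card_eq_fintype_card, Fintype.card_fin]
    rw [← pow_mul]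
  · rw [← Nat.card_congr (auxUnitsEquiv (Matrix (Fin 2) (Fin 2) (R ⧸ maximalIdeal R)))]
    have := Matrix.card_GL_field (𝔽 := R ⧸ maximalIdeal R) 2
    rw [this, Fin.prod_univ_two]
    rw [Nat.card_eq_fintype_card]
    norm_num

theorem auxCardStab (R : Type*) [CommRing R] [Finite R] [IsLocalRing R] (b : R) (A : Ideal R)
    (hAnn : ∀ x, b * x = 0 ↔ x ∈ A) (hAm : A ≤ maximalIdeal R) :
    Nat.card {X : Matrix (Fin 2) (Fin 2) R //
        X * !![0, b; 0, 0] = !![0, b; 0, 0] * X ∧ IsUnit X} =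
      (Nat.card R - Nat.card ↥(maximalIdeal R)) * (Nat.card R * Nat.card ↥A ^ 2) := by
  classical
  have hcomm : ∀ X : Matrix (Fin 2) (Fin 2) R,
      X * !![0, b; 0, 0] = !![0, b; 0, 0] * X ↔
        (X 1 0 ∈ A ∧ X 0 0 - X 1 1 ∈ A) := by
    intro X
    rw [← hAnn, ← hAnn]
    constructor
    · intro h
      have h2 := congrArg (fun Z : Matrix (Fin 2) (Fin 2) R => Z 0 1) h
      have h4 := congrArg (fun Z : Matrix (Fin 2) (Fin 2) R => Z 1 1) h
      simp [Matrix.mul_apply, Fin.sum_univ_two] at h2 h4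
      exact ⟨by linear_combination h4, by linear_combination h2⟩
    · rintro ⟨h1, h2⟩
      ext i j
      fin_cases i <;> fin_cases j <;>
        simp [Matrix.mul_apply, Fin.sum_univ_two] <;>
        first
          | linear_combination h1
          | linear_combination -h1
          | linear_combination h2
  have hprime : (maximalIdeal R).IsPrime := (maximalIdeal.isMaximal R).isPrime
  have hunitIff : ∀ X : Matrix (Fin 2) (Fin 2) R, X 1 0 ∈ A → X 0 0 - X 1 1 ∈ A →
      (IsUnit X ↔ X 0 0 ∉ maximalIdeal R) := by
    intro X hz ha
    rw [Matrix.isUnit_iff_isUnit_det, Matrix.det_fin_two, ← notMem_maximalIdeal, not_iff_not]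
    have hzm : X 1 0 ∈ maximalIdeal R := hAm hz
    have ham : X 0 0 - X 1 1 ∈ maximalIdeal R := hAm ha
    constructor
    · intro hd
      have h01 : X 0 1 * X 1 0 ∈ maximalIdeal R := Ideal.mul_mem_left _ _ hzm
      have h0011 : X 0 0 * X 1 1 ∈ maximalIdeal R := by
        have := Ideal.add_mem _ hd h01
        simpa using this
      rcases hprime.mul_mem_iff_mem_or_mem.1 h0011 with h | h
      · exact h
      · have := Ideal.add_mem _ ham h
        simpa using this
    · intro h0
      have h11 : X 1 1 ∈ maximalIdeal R := by
        have := Ideal.sub_mem _ h0 ham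
        simpa using this
      exact Ideal.sub_mem _ (Ideal.mul_mem_left _ _ h11) (Ideal.mul_mem_left _ _ hzm)
  -- equiv with product
  have hequiv : {X : Matrix (Fin 2) (Fin 2) R //
        X * !![0, b; 0, 0] = !![0, b; 0, 0] * X ∧ IsUnit X} ≃
      {x : R // x ∉ maximalIdeal R} × R × ↥A × ↥A := by
    refine ⟨fun P => (⟨P.1 0 0, ?_⟩, P.1 0 1, ⟨P.1 1 0, ?_⟩, ⟨P.1 0 0 - P.1 1 1, ?_⟩),
      fun t => ⟨!![t.1.1, t.2.1; t.2.2.1.1, t.1.1 - t.2.2.2.1], ?_, ?_⟩, fun P => ?_, fun t => ?_⟩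
    · exact (hunitIff P.1 ((hcomm P.1).1 P.2.1).1 ((hcomm P.1).1 P.2.1).2).1 P.2.2
    · exact ((hcomm P.1).1 P.2.1).1
    · exact ((hcomm P.1).1 P.2.1).2
    · apply (hcomm _).2
      constructor <;> simp [t.2.2.1.2, t.2.2.2.2]
    · apply (hunitIff _ (by simp [t.2.2.1.2]) (by simp [t.2.2.2.2])).2
      simp [t.1.2]
    · obtain ⟨X, hX⟩ := P
      refine Subtype.ext ?_
      simp only
      ext i j
      fin_cases i <;> fin_cases j <;> simp [sub_sub_cancel]
    · obtain ⟨x, y, z, a⟩ := t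
      simp only [Prod.mk.injEq]
      refine ⟨Subtype.ext (by simp), by simp, Subtype.ext (by simp), Subtype.ext (by simp)⟩
  rw [Nat.card_congr hequiv, Nat.card_prod, Nat.card_prod, Nat.card_prod]
  congr 1
  · -- card of complement of maximal ideal
    have : Fintype R := Fintype.ofFinite R
    simp only [Nat.card_eq_fintype_card]
    rw [Fintype.card_subtype_compl]
  · rw [sq]

/-- Orbit size of `M(0,b)` under `GL₂(R)`-conjugation, where `b ∈ J(R)^k \ J(R)^(k+1)`,
`b ≠ 0`, over a finite commutative local principal ring of cardinality `q ^ n` with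
residue field of cardinality `q`: the orbit has `q ^ (2(n-k-1)) * (q² - 1)` elements. -/
theorem orbit_card_M0b (R : Type*) [CommRing R] [Finite R] [IsLocalRing R]
    [IsPrincipalIdealRing R] (q n k : ℕ)
    (hcard : Nat.card R = q ^ n)
    (hres : Nat.card (R ⧸ IsLocalRing.maximalIdeal R) = q)
    (b : R) (hb : b ≠ 0)
    (hbk : b ∈ (IsLocalRing.maximalIdeal R) ^ k ∧
      b ∉ (IsLocalRing.maximalIdeal R) ^ (k + 1)) :
    Set.ncard {B : Matrix (Fin 2) (Fin 2) R | ∃ P : (Matrix (Fin 2) (Fin 2) R)ˣ,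
        B = (P : Matrix (Fin 2) (Fin 2) R) * !![0, b; 0, 0] *
          ((P⁻¹ : _) : Matrix (Fin 2) (Fin 2) R)} =
      q ^ (2 * (n - k - 1)) * (q ^ 2 - 1) := by
  classical
  obtain ⟨π, hπ⟩ : ∃ π : R, maximalIdeal R = Ideal.span {π} := by
    obtain ⟨π, hπ⟩ := (IsPrincipalIdealRing.principal (maximalIdeal R)).principal
    exact ⟨π, by rw [hπ]⟩
  have hnilm : IsNilpotent (maximalIdeal R) := by
    have := IsArtinianRing.isNilpotent_jacobson_bot (R := R)
    rwa [jacobson_eq_maximalIdeal ⊥ bot_ne_top] at this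
  have hnil : ∃ t, π ^ t = 0 := by
    obtain ⟨E, hE⟩ := hnilm
    refine ⟨E, ?_⟩
    have hmem : π ^ E ∈ (maximalIdeal R) ^ E :=
      Ideal.pow_mem_pow (by rw [hπ]; exact Ideal.mem_span_singleton_self π) E
    rw [hE] at hmem
    simpa using hmem
  set e := Nat.find hnil with hedef
  have he : π ^ e = 0 := Nat.find_spec hnil
  have hemin : ∀ t, t < e → π ^ t ≠ 0 := fun t ht => Nat.find_min hnil ht
  have hfinq : Finite (R ⧸ maximalIdeal R) :=
    Finite.of_surjective _ Ideal.Quotient.mk_surjective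
  have hq2 : 2 ≤ q := by
    rw [← hres]
    have : Nontrivial (R ⧸ maximalIdeal R) := Ideal.Quotient.nontrivial_iff.mpr
      (Ideal.IsMaximal.ne_top inferInstance)
    exact Finite.one_lt_card_iff_nontrivial.2 this
  obtain ⟨hen, hcpow⟩ := auxCardPow π hπ e he hemin q n hq2 hcard hres
  have hn1 : 1 ≤ n := by
    by_contra h
    have hn0 : n = 0 := by omega
    have h2 : Nat.card R = 1 := by rw [hcard, hn0, pow_zero]
    have h3 := Finite.one_lt_card_iff_nontrivial.2 (inferInstance : Nontrivial R)
    omega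
  have hkn : k < n := by
    by_contra h
    push_neg at h
    have hle : (maximalIdeal R) ^ k ≤ (maximalIdeal R) ^ n := Ideal.pow_le_pow_right h
    have hbot : (maximalIdeal R) ^ n = ⊥ := by
      rw [auxPowEq π hπ e he hemin, ← hen, he, Ideal.span_singleton_eq_bot.mpr rfl]
    have := hle hbk.1
    rw [hbot] at this
    exact hb (by simpa using this)
  obtain ⟨u, j, hj, hbj⟩ := auxVal π hπ e he hemin b hb
  have hjk : j = k := by
    have hbmj : b ∈ (maximalIdeal R) ^ j := by
      rw [auxPowEq π hπ e he hemin]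
      exact Ideal.mem_span_singleton'.2 ⟨↑u, hbj.symm⟩
    have hbmj1 : b ∉ (maximalIdeal R) ^ (j + 1) := by
      intro hmem
      rw [auxPowEq π hπ e he hemin] at hmem
      obtain ⟨c, hc⟩ := Ideal.mem_span_singleton'.1 hmem
      have h1 : π ^ j * (1 - ↑u⁻¹ * c * π) = 0 := by
        have h3 : π ^ j = ↑u⁻¹ * c * (π ^ j * π) := by
          calc π ^ j = ↑u⁻¹ * (↑u * π ^ j) := by
                rw [← mul_assoc, Units.inv_mul, one_mul]
          _ = ↑u⁻¹ * (c * (π ^ j * π)) := by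
                rw [← hbj, ← hc, pow_succ]
          _ = ↑u⁻¹ * c * (π ^ j * π) := by ring
        calc π ^ j * (1 - ↑u⁻¹ * c * π) = π ^ j - ↑u⁻¹ * c * (π ^ j * π) := by ring
        _ = 0 := by rw [← h3]; ring
      have hunit : IsUnit (1 - ↑u⁻¹ * c * π) := by
        rw [← notMem_maximalIdeal]
        intro hmm
        have hπm : (↑u⁻¹ : R) * c * π ∈ maximalIdeal R := by
          rw [hπ]
          exact Ideal.mem_span_singleton'.2 ⟨↑u⁻¹ * c, rfl⟩
        have h1m : (1 : R) ∈ maximalIdeal R := by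
          have := Ideal.add_mem _ hmm hπm
          simpa using this
        exact (Ideal.IsMaximal.ne_top inferInstance) ((Ideal.eq_top_iff_one _).2 h1m)
      refine hemin j hj ?_
      have h4 := h1
      rw [mul_comm] at h4
      exact (hunit.mul_right_eq_zero).1 h4
    rcases lt_trichotomy j k with h | h | h
    · exact absurd (Ideal.pow_le_pow_right (by omega : j + 1 ≤ k) hbk.1) hbmj1
    · exact h
    · exact absurd (Ideal.pow_le_pow_right (by omega : k + 1 ≤ j) hbmj) hbk.2
  subst hjk
  -- annihilator of b
  set A : Ideal R := (maximalIdeal R) ^ (n - j) with hA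
  have hAnn : ∀ x : R, b * x = 0 ↔ x ∈ A := by
    intro x
    rw [hA, ← hen]
    have h1 : b * x = ↑u * (π ^ j * x) := by rw [hbj]; ring
    rw [h1, Units.mul_right_eq_zero u]
    exact auxAnn π hπ e he hemin j (by omega) x
  have hAm : A ≤ maximalIdeal R := by
    rw [hA]
    exact Ideal.pow_le_self (by omega)
  set M := Matrix (Fin 2) (Fin 2) R with hM
  set N : M := !![0, b; 0, 0] with hN
  have hset : {B : M | ∃ P : Mˣ, B = ↑P * N * ↑(P⁻¹ : Mˣ)} =
      MulAction.orbit (ConjAct Mˣ) N := by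
    ext B
    constructor
    · rintro ⟨P, rfl⟩
      refine MulAction.mem_orbit_iff.2 ⟨ConjAct.toConjAct P, ?_⟩
      rw [ConjAct.units_smul_def, ConjAct.ofConjAct_toConjAct]
    · intro hB
      obtain ⟨g, hg⟩ := MulAction.mem_orbit_iff.1 hB
      exact ⟨ConjAct.ofConjAct g, by rw [← hg, ConjAct.units_smul_def]⟩
  haveI hfM : Fintype M := Fintype.ofFinite _
  haveI hfG : Fintype (ConjAct Mˣ) := Fintype.ofFinite _
  haveI hfO : Fintype (MulAction.orbit (ConjAct Mˣ) N) := Fintype.ofFinite _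
  haveI hfS : Fintype (MulAction.stabilizer (ConjAct Mˣ) N) := Fintype.ofFinite _
  have horbstab : Nat.card (MulAction.orbit (ConjAct Mˣ) N) *
      Nat.card (MulAction.stabilizer (ConjAct Mˣ) N) = Nat.card Mˣ := by
    have h1 := MulAction.card_orbit_mul_card_stabilizer_eq_card_group (ConjAct Mˣ) N
    simp only [← Nat.card_eq_fintype_card] at h1
    exact h1
  have hstabequiv : MulAction.stabilizer (ConjAct Mˣ) N ≃
      {X : M // X * N = N * X ∧ IsUnit X} := by
    refine ⟨fun g => ⟨↑(ConjAct.ofConjAct (g : ConjAct Mˣ)), ?_, (ConjAct.ofConjAct (g : ConjAct Mˣ)).isUnit⟩,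
      fun X => ⟨ConjAct.toConjAct X.2.2.unit, ?_⟩, fun g => ?_, fun X => ?_⟩
    · have hg := g.2
      rw [MulAction.mem_stabilizer_iff, ConjAct.units_smul_def] at hg
      exact ((Units.mul_inv_eq_iff_eq_mul _).1 hg)
    · show ConjAct.toConjAct X.2.2.unit • N = N
      rw [ConjAct.units_smul_def, ConjAct.ofConjAct_toConjAct,
        Units.mul_inv_eq_iff_eq_mul, X.2.2.unit_spec]
      exact X.2.1
    · refine Subtype.ext ?_
      have h5 : ((ConjAct.ofConjAct (g : ConjAct Mˣ)).isUnit.unit) =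
          ConjAct.ofConjAct (g : ConjAct Mˣ) := Units.ext (IsUnit.unit_spec _)
      show ConjAct.toConjAct ((ConjAct.ofConjAct (g : ConjAct Mˣ)).isUnit.unit) = ↑g
      rw [h5, ConjAct.toConjAct_ofConjAct]
    · refine Subtype.ext ?_
      exact X.2.2.unit_spec
  have hstabcard : Nat.card (MulAction.stabilizer (ConjAct Mˣ) N) =
      (Nat.card R - Nat.card ↥(maximalIdeal R)) * (Nat.card R * Nat.card ↥A ^ 2) := by
    rw [Nat.card_congr hstabequiv]
    exact auxCardStab R b A hAnn hAm
  have hGL := auxCardGL R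
  rw [hres] at hGL
  have hcm : Nat.card ↥(maximalIdeal R) = q ^ (n - 1) := by
    have h6 := hcpow 1 (by omega)
    rw [pow_one] at h6
    rw [h6, hen]
  have hcA : Nat.card ↥A = q ^ j := by
    have h7 := hcpow (n - j) (by omega)
    rw [hA, h7, show e - (n - j) = j by omega]
  have hncard : Set.ncard {B : M | ∃ P : Mˣ, B = ↑P * N * ↑(P⁻¹ : Mˣ)} =
      Nat.card (MulAction.orbit (ConjAct Mˣ) N) := by
    rw [← hset]
    exact (Nat.card_coe_set_eq _).symm
  rw [hncard]
  have hstabpos : 0 < Nat.card (MulAction.stabilizer (ConjAct Mˣ) N) := Nat.card_pos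
  apply Nat.eq_of_mul_eq_mul_right hstabpos
  rw [horbstab, hstabcard, hGL, hcm, hcA, hcard]
  obtain ⟨t, ht⟩ : ∃ t, n = j + 1 + t := ⟨n - j - 1, by omega⟩
  subst ht
  rw [show j + 1 + t - j - 1 = t by omega, show j + 1 + t - 1 = j + t by omega]
  have h1 : q ^ (j + t) ≤ q ^ (j + 1 + t) := Nat.pow_le_pow_right (by omega) (by omega)
  have h2 : 1 ≤ q ^ 2 := Nat.one_le_pow _ _ (by omega)
  have h3 : q ≤ q ^ 2 := by nlinarith
  zify [h1, h2, h3]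
  ring
end

section
/- Let R be a finite commutative local principal ring of cardinality q^n with R/J(R) ≅ GF(q). Let a ∈ J(R)^l \ J(R)^{l+1} with a ≠ 0. Then the GL₂(R)-conjugacy orbit of the matrix M(a,0) (first row (a,0), second row zero) has exactly q^{2n−2l−1}(q+1) elements. -/
/-!
Orbit–stabilizer for the conjugation action of `GL₂(R)`; `k` is the residue field, `𝔪` the
maximal ideal and `q = |k|`.

Reduction mod `𝔪` maps `GL₂(R)` onto `GL₂(k)` with kernel `1 + M₂(𝔪)`, so
`|GL₂(R)| = (q² - 1)(q² - q)|𝔪|⁴` with `|𝔪| = q^(n-1)`.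

A matrix `[[p, b], [c, d]]` commutes with `M(a, 0)` iff `b a = c a = 0`. As `a ≠ 0`, the
annihilator of `a` lies in `𝔪`, so such a matrix is invertible iff `p` and `d` are units, and
the stabilizer has `|Rˣ|² |ann a|²` elements, where `|Rˣ| = (q - 1)|𝔪|`. Finally `a = u π^l`
with `u` a unit and `π` a generator of `𝔪`, and `|ann a| = |ann π^l| = q^l`: multiplication
by `π` maps `ann π^(j+1)` onto `ann π^j` (which lies in `𝔪 = (π)`) with kernel `ann π`, and
`|ann π| = |R| / |πR| = q`.
-/

open IsLocalRing Ideal Matrix MulAction ConjAct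

namespace Ideal

variable {R : Type*} [CommRing R]

theorem torsionOf_unit_mul (u : Rˣ) (x : R) : torsionOf R R (u * x) = torsionOf R R x := by
  ext r
  simp only [mem_torsionOf_iff, smul_eq_mul, mul_left_comm r, u.isUnit.mul_right_eq_zero]

theorem card_eq_card_span_singleton_mul_card_torsionOf (x : R) :
    Nat.card R = Nat.card (span {x}) * Nat.card (torsionOf R R x) := by
  rw [(torsionOf R R x).card_eq_card_quotient_mul_card, mul_comm]
  exact congrArg (· * _) (Nat.card_congr (quotTorsionOfEquivSpanSingleton R R x).toEquiv)

theorem card_torsionOf_mul (x y : R) :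
    Nat.card (torsionOf R R (x * y)) =
      Nat.card (torsionOf R R y) * Nat.card ↥(torsionOf R R x ⊓ span {y}) := by
  set f : torsionOf R R (x * y) →ₗ[R] R :=
    LinearMap.toSpanSingleton R R y ∘ₗ (torsionOf R R (x * y)).subtype
  have hle : torsionOf R R y ≤ torsionOf R R (x * y) := fun r hr => by
    simp only [mem_torsionOf_iff, smul_eq_mul] at hr ⊢
    rw [mul_left_comm, hr, mul_zero]
  have hker : ↥(LinearMap.ker f) ≃ₗ[R] ↥(torsionOf R R y) :=
    (LinearEquiv.ofEq _ _ (LinearMap.ker_comp _ _)).trans (Submodule.comapSubtypeEquivOfLe hle)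
  have hrange : LinearMap.range f = torsionOf R R x ⊓ span {y} := by
    rw [LinearMap.range_comp, Submodule.range_subtype]
    ext z
    simp only [Submodule.mem_map, mem_torsionOf_iff, smul_eq_mul, LinearMap.toSpanSingleton_apply,
      Submodule.mem_inf, mem_span_singleton']
    constructor
    · rintro ⟨w, hw, rfl⟩
      exact ⟨by rw [mul_assoc, mul_comm y, hw], w, rfl⟩
    · rintro ⟨hz, w, rfl⟩
      exact ⟨w, by rw [mul_comm x, ← mul_assoc, hz], rfl⟩
  rw [(LinearMap.ker f).card_eq_card_quotient_mul_card, Nat.card_congr hker.toEquiv,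
    Nat.card_congr f.quotKerEquivRange.toEquiv, hrange]

end Ideal

section LocalRing

variable {R : Type*} [CommRing R] [IsLocalRing R]

theorem IsLocalRing.torsionOf_le_maximalIdeal {x : R} (hx : x ≠ 0) :
    torsionOf R R x ≤ maximalIdeal R := fun r hr => by
  by_contra h
  exact hx ((notMem_maximalIdeal.mp h).mul_right_eq_zero.mp hr)

theorem IsLocalRing.exists_unit_mul_pow_eq {π a : R} (hπ : maximalIdeal R = span {π}) {l : ℕ}
    (ha : a ∈ maximalIdeal R ^ l) (ha' : a ∉ maximalIdeal R ^ (l + 1)) :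
    ∃ u : Rˣ, u * π ^ l = a := by
  simp only [hπ, span_singleton_pow, mem_span_singleton'] at ha ha'
  obtain ⟨c, rfl⟩ := ha
  refine ⟨(notMem_maximalIdeal.mp fun hc => ha' ?_).unit, rfl⟩
  obtain ⟨d, rfl⟩ := mem_span_singleton'.mp (hπ ▸ hc)
  exact ⟨d, by ring⟩

theorem IsLocalRing.card_eq_card_residueField_mul_card_maximalIdeal :
    Nat.card R = Nat.card (ResidueField R) * Nat.card (maximalIdeal R) :=
  (maximalIdeal R).card_eq_card_quotient_mul_card.trans (mul_comm _ _)

variable [Finite R]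

instance IsLocalRing.ResidueField.finite : Finite (ResidueField R) :=
  .of_surjective _ residue_surjective

theorem IsLocalRing.card_units_add_card_maximalIdeal :
    Nat.card Rˣ + Nat.card (maximalIdeal R) = Nat.card R := by
  have hunits : Set.range ((↑) : Rˣ → R) = (maximalIdeal R : Set R)ᶜ := by
    ext x
    exact notMem_maximalIdeal.symm
  rw [← Nat.card_range_of_injective Units.val_injective, hunits, Nat.card_coe_set_eq,
    ← SetLike.coe_sort_coe, Nat.card_coe_set_eq, add_comm, Set.ncard_add_ncard_compl]

theorem IsLocalRing.card_units :
    Nat.card Rˣ = (Nat.card (ResidueField R) - 1) * Nat.card (maximalIdeal R) := by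
  have h := card_units_add_card_maximalIdeal (R := R)
  rw [card_eq_card_residueField_mul_card_maximalIdeal (R := R)] at h
  rw [Nat.sub_one_mul]
  omega

theorem IsLocalRing.card_torsionOf_generator {π : R} (hπ : maximalIdeal R = span {π}) :
    Nat.card (torsionOf R R π) = Nat.card (ResidueField R) := by
  have h := card_eq_card_span_singleton_mul_card_torsionOf π
  rw [← hπ, card_eq_card_residueField_mul_card_maximalIdeal] at h
  exact Nat.eq_of_mul_eq_mul_left Nat.card_pos (h.symm.trans (mul_comm _ _))

theorem IsLocalRing.card_torsionOf_generator_pow {π : R} (hπ : maximalIdeal R = span {π})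
    {l : ℕ} (hl : π ^ l ≠ 0) :
    Nat.card (torsionOf R R (π ^ l)) = Nat.card (ResidueField R) ^ l := by
  induction l with
  | zero => simp
  | succ j ih =>
    have hj : π ^ j ≠ 0 := fun h => hl (by rw [pow_succ, h, zero_mul])
    rw [pow_succ, card_torsionOf_mul, inf_eq_left.mpr (hπ ▸ torsionOf_le_maximalIdeal hj),
      ih hj, card_torsionOf_generator hπ, pow_succ, mul_comm]

theorem IsLocalRing.card_torsionOf_of_mem_pow_of_notMem_pow_succ [IsPrincipalIdealRing R]
    {a : R} {l : ℕ} (ha : a ∈ maximalIdeal R ^ l) (ha' : a ∉ maximalIdeal R ^ (l + 1)) :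
    Nat.card (torsionOf R R a) = Nat.card (ResidueField R) ^ l := by
  obtain ⟨π, hπ⟩ := (IsPrincipalIdealRing.principal (maximalIdeal R)).principal
  obtain ⟨u, rfl⟩ := exists_unit_mul_pow_eq hπ ha ha'
  have hl : π ^ l ≠ 0 := fun h => ha' (by rw [h, mul_zero]; exact zero_mem _)
  rw [torsionOf_unit_mul, card_torsionOf_generator_pow hπ hl]

end LocalRing

section GeneralLinearGroup

variable {R : Type*} [CommRing R] [IsLocalRing R] {ι : Type*} [Fintype ι] [DecidableEq ι]

theorem IsLocalRing.mapMatrix_residue_eq_one_iff (M : Matrix ι ι R) :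
    (residue R).mapMatrix M = 1 ↔
      ∀ i j, M i j - (1 : Matrix ι ι R) i j ∈ maximalIdeal R := by
  rw [← sub_eq_zero, ← map_one (residue R).mapMatrix, ← map_sub, ← Matrix.ext_iff]
  simp only [RingHom.mapMatrix_apply, map_apply, Matrix.zero_apply, Matrix.sub_apply,
    residue_eq_zero_iff]

theorem IsLocalRing.isUnit_of_mapMatrix_residue_eq_one {M : Matrix ι ι R}
    (hM : (residue R).mapMatrix M = 1) : IsUnit M := by
  rw [isUnit_iff_isUnit_det]
  refine IsUnit.of_map (residue R) _ ?_
  rw [RingHom.map_det, hM, det_one]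
  exact isUnit_one

theorem Matrix.GeneralLinearGroup.map_residue_surjective :
    Function.Surjective (GeneralLinearGroup.map (n := ι) (residue R)) := by
  intro u
  set B : Matrix ι ι R := (u : Matrix ι ι _).map (Function.surjInv residue_surjective)
  have hB : (residue R).mapMatrix B = u := by
    ext i j
    exact Function.surjInv_eq residue_surjective _
  have hdet : IsUnit B := by
    rw [isUnit_iff_isUnit_det]
    refine IsUnit.of_map (residue R) _ ?_
    rw [RingHom.map_det, hB, ← isUnit_iff_isUnit_det]
    exact u.isUnit
  exact ⟨hdet.unit, Units.ext hB⟩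

noncomputable def Matrix.GeneralLinearGroup.kerMapResidueEquiv :
    (GeneralLinearGroup.map (n := ι) (residue R)).ker ≃ Matrix ι ι (maximalIdeal R) where
  toFun P i j := ⟨P.1 i j - (1 : Matrix ι ι R) i j,
    (mapMatrix_residue_eq_one_iff _).mp (Units.ext_iff.mp P.2) i j⟩
  invFun X :=
    have hX : (residue R).mapMatrix (1 + of fun i j => (X i j : R)) = 1 :=
      (mapMatrix_residue_eq_one_iff _).mpr fun i j => by simp
    ⟨(isUnit_of_mapMatrix_residue_eq_one hX).unit, Units.ext hX⟩
  left_inv P := by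
    ext i j
    simp
  right_inv X := by
    ext i j
    simp

theorem Matrix.GeneralLinearGroup.card_eq_card_residueField_mul [Finite R] :
    Nat.card (GL ι R) =
      Nat.card (GL ι (ResidueField R)) * Nat.card (maximalIdeal R) ^ (Fintype.card ι ^ 2) := by
  rw [Subgroup.card_eq_card_quotient_mul_card_subgroup (GeneralLinearGroup.map (residue R)).ker,
    Nat.card_congr (QuotientGroup.quotientKerEquivOfSurjective _ map_residue_surjective).toEquiv,
    Nat.card_congr kerMapResidueEquiv]
  simp [Matrix, Nat.card_fun, ← pow_mul, sq]

theorem IsLocalRing.card_GL_fin_two [Finite R] :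
    Nat.card (GL (Fin 2) R) = (Nat.card (ResidueField R) ^ 2 - 1) *
      (Nat.card (ResidueField R) ^ 2 - Nat.card (ResidueField R)) *
        Nat.card (maximalIdeal R) ^ 4 := by
  have : Fintype (ResidueField R) := .ofFinite _
  rw [GeneralLinearGroup.card_eq_card_residueField_mul, card_GL_field, Fin.prod_univ_two,
    Nat.card_eq_fintype_card (α := ResidueField R)]
  simp

end GeneralLinearGroup

theorem ConjAct.units_smul_eq_self_iff {M : Type*} [Monoid M] (g : ConjAct Mˣ) (x : M) :
    g • x = x ↔ Commute ((ofConjAct g : Mˣ) : M) x := by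
  rw [units_smul_def, Units.mul_inv_eq_iff_eq_mul]
  rfl

theorem ConjAct.orbit_units_eq {M : Type*} [Monoid M] (x : M) :
    orbit (ConjAct Mˣ) x = {y | ∃ P : Mˣ, y = P * x * ↑P⁻¹} := by
  ext y
  constructor
  · rintro ⟨g, rfl⟩
    exact ⟨ofConjAct g, units_smul_def g x⟩
  · rintro ⟨P, rfl⟩
    exact ⟨toConjAct P, units_smul_def _ x⟩

theorem Matrix.commute_fin_two_diag_zero_iff {R : Type*} [CommRing R] (a : R)
    (M : Matrix (Fin 2) (Fin 2) R) :
    Commute M !![a, 0; 0, 0] ↔ M 0 1 ∈ torsionOf R R a ∧ M 1 0 ∈ torsionOf R R a := by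
  rw [Commute, SemiconjBy, ← Matrix.ext_iff]
  simp [Fin.forall_fin_two, Matrix.mul_apply, mul_comm a, eq_comm]

theorem IsLocalRing.isUnit_det_fin_two_iff {R : Type*} [CommRing R] [IsLocalRing R]
    {M : Matrix (Fin 2) (Fin 2) R} (h : M 0 1 ∈ maximalIdeal R) :
    IsUnit M.det ↔ IsUnit (M 0 0) ∧ IsUnit (M 1 1) := by
  rw [det_fin_two, ← IsUnit.mul_iff, ← notMem_maximalIdeal, ← notMem_maximalIdeal,
    Submodule.sub_mem_iff_left _ (mul_mem_right _ _ h)]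

noncomputable def Matrix.stabilizerConjActFinTwoEquiv {R : Type*} [CommRing R] [IsLocalRing R]
    {a : R} (ha : a ≠ 0) :
    stabilizer (ConjAct (GL (Fin 2) R)) !![a, 0; 0, 0] ≃
      Rˣ × Rˣ × torsionOf R R a × torsionOf R R a where
  toFun g :=
    have hc := (commute_fin_two_diag_zero_iff a _).mp ((units_smul_eq_self_iff _ _).mp g.2)
    have hu := (isUnit_det_fin_two_iff (torsionOf_le_maximalIdeal ha hc.1)).mp
      ((isUnit_iff_isUnit_det _).mp (ofConjAct g.1).isUnit)
    (hu.1.unit, hu.2.unit, ⟨_, hc.1⟩, ⟨_, hc.2⟩)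
  invFun x :=
    have hdet : IsUnit (!![(x.1 : R), x.2.2.1; x.2.2.2, x.2.1] : Matrix (Fin 2) (Fin 2) R).det :=
      (isUnit_det_fin_two_iff (by simpa using torsionOf_le_maximalIdeal ha x.2.2.1.2)).mpr
        ⟨by simp, by simp⟩
    ⟨toConjAct ((isUnit_iff_isUnit_det _).mpr hdet).unit, (units_smul_eq_self_iff _ _).mpr
      ((commute_fin_two_diag_zero_iff a _).mpr ⟨by simp [x.2.2.1.2], by simp [x.2.2.2.2]⟩)⟩
  left_inv g := by
    refine Subtype.ext (ofConjAct.injective (Units.ext ?_))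
    ext i j
    fin_cases i <;> fin_cases j <;> rfl
  right_inv x := by
    ext <;> rfl

theorem Matrix.card_stabilizer_conjAct_fin_two {R : Type*} [CommRing R] [IsLocalRing R]
    {a : R} (ha : a ≠ 0) :
    Nat.card (stabilizer (ConjAct (GL (Fin 2) R)) !![a, 0; 0, 0]) =
      Nat.card Rˣ ^ 2 * Nat.card (torsionOf R R a) ^ 2 := by
  rw [Nat.card_congr (stabilizerConjActFinTwoEquiv ha)]
  simp only [Nat.card_prod]
  ring

private theorem orbit_card_arith {q n l m x : ℕ} (hq : 2 ≤ q) (hm : q ^ n = q * m)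
    (hl : q ^ l ≤ m)
    (h : ((q - 1) * m) ^ 2 * (q ^ l) ^ 2 * x = (q ^ 2 - 1) * (q ^ 2 - q) * m ^ 4) :
    x = q ^ (2 * n - 2 * l - 1) * (q + 1) := by
  have hm0 : 0 < m := lt_of_lt_of_le (pow_pos (by omega) l) hl
  obtain ⟨n, rfl⟩ : ∃ n', n = n' + 1 := ⟨n - 1, by
    rcases n with _ | n
    · rw [pow_zero] at hm
      nlinarith
    · omega⟩
  have hm' : m = q ^ n := Nat.mul_left_cancel (by omega : 0 < q) (by rw [← hm, pow_succ'])
  subst hm'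
  obtain ⟨k, rfl⟩ := Nat.exists_eq_add_of_le ((Nat.pow_le_pow_iff_right hq).mp hl)
  rw [show 2 * (l + k + 1) - 2 * l - 1 = 2 * k + 1 by omega]
  refine Nat.eq_of_mul_eq_mul_left (Nat.pos_of_ne_zero (by simp; omega)) (h.trans ?_)
  have h1 : 1 ≤ q := by omega
  have h2 : 1 ≤ q ^ 2 := Nat.one_le_pow _ _ (by omega)
  have h3 : q ≤ q ^ 2 := Nat.le_self_pow (by norm_num) q
  zify [h1, h2, h3]
  ring

theorem orbit_card_Ma0_general (R : Type*) [CommRing R] [Finite R] [IsLocalRing R]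
    [IsPrincipalIdealRing R] (q n l : ℕ)
    (hcard : Nat.card R = q ^ n)
    (hres : Nat.card (R ⧸ IsLocalRing.maximalIdeal R) = q)
    (a : R)
    (hal : a ∈ (IsLocalRing.maximalIdeal R) ^ l ∧
      a ∉ (IsLocalRing.maximalIdeal R) ^ (l + 1)) :
    Set.ncard {B : Matrix (Fin 2) (Fin 2) R | ∃ P : (Matrix (Fin 2) (Fin 2) R)ˣ,
        B = (P : Matrix (Fin 2) (Fin 2) R) * !![a, 0; 0, 0] *
          ((P⁻¹ : _) : Matrix (Fin 2) (Fin 2) R)} =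
      q ^ (2 * n - 2 * l - 1) * (q + 1) := by
  have hk : Nat.card (ResidueField R) = q := hres
  have ha : a ≠ 0 := fun h => hal.2 (h ▸ zero_mem _)
  have hann := card_torsionOf_of_mem_pow_of_notMem_pow_succ hal.1 hal.2
  set S := stabilizer (ConjAct (GL (Fin 2) R)) !![a, 0; 0, 0]
  have horbit_stabilizer : Nat.card S * S.index = Nat.card (GL (Fin 2) R) := S.card_mul_index
  rw [← orbit_units_eq, ← index_stabilizer]
  refine orbit_card_arith (m := Nat.card (maximalIdeal R)) (hk ▸ Finite.one_lt_card) ?_ ?_ ?_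
  · rw [← hcard, ← hk]
    exact card_eq_card_residueField_mul_card_maximalIdeal
  · rw [← hk, ← hann]
    exact Nat.card_le_card_of_injective _
      (Submodule.inclusion_injective (torsionOf_le_maximalIdeal ha))
  · rwa [card_stabilizer_conjAct_fin_two ha, card_units, hann, card_GL_fin_two, hk]
      at horbit_stabilizer

/-- Orbit size of `M(a,0)` under `GL₂(R)`-conjugation, where `a ∈ J(R)^l \ J(R)^(l+1)`,
`a ≠ 0`, over a finite commutative local principal ring of cardinality `q ^ n` with
residue field of cardinality `q`: the orbit has `q ^ (2n - 2l - 1) * (q + 1)` elements. -/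
theorem orbit_card_Ma0 (R : Type*) [CommRing R] [Finite R] [IsLocalRing R]
    [IsPrincipalIdealRing R] (q n l : ℕ)
    (hcard : Nat.card R = q ^ n)
    (hres : Nat.card (R ⧸ IsLocalRing.maximalIdeal R) = q)
    (a : R) (ha : a ≠ 0)
    (hal : a ∈ (IsLocalRing.maximalIdeal R) ^ l ∧
      a ∉ (IsLocalRing.maximalIdeal R) ^ (l + 1)) :
    Set.ncard {B : Matrix (Fin 2) (Fin 2) R | ∃ P : (Matrix (Fin 2) (Fin 2) R)ˣ,
        B = (P : Matrix (Fin 2) (Fin 2) R) * !![a, 0; 0, 0] *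
          ((P⁻¹ : _) : Matrix (Fin 2) (Fin 2) R)} =
      q ^ (2 * n - 2 * l - 1) * (q + 1) :=
  orbit_card_Ma0_general R q n l hcard hres a hal
end

section
/- Let R be a finite commutative local principal ring and let a ∈ J(R)^l \ J(R)^{l+1}, b ∈ J(R)^k \ J(R)^{k+1} with k ≥ l. Then the set {ta + wb : t ∈ R, w ∈ U(R)} equals J(R)^l. -/
/-- In a local PIR, an element of `m^l \ m^(l+1)` generates `m^l`. -/
lemma span_eq_pow_of_mem_not_mem (R : Type*) [CommRing R] [IsLocalRing R]
    [IsPrincipalIdealRing R] (l : ℕ) (a : R)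
    (h1 : a ∈ (IsLocalRing.maximalIdeal R) ^ l)
    (h2 : a ∉ (IsLocalRing.maximalIdeal R) ^ (l + 1)) :
    Ideal.span {a} = (IsLocalRing.maximalIdeal R) ^ l := by
  set I := (IsLocalRing.maximalIdeal R) ^ l with hI
  obtain ⟨g, hg⟩ := (IsPrincipalIdealRing.principal I)
  have hg' : I = Ideal.span {g} := hg
  have hgmem : g ∈ I := by rw [hg']; exact Ideal.subset_span rfl
  have ha : a ∈ Ideal.span {g} := by rw [← hg']; exact h1
  obtain ⟨c, hc⟩ := Ideal.mem_span_singleton'.mp ha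
  have hcu : IsUnit c := by
    by_contra hcn
    have hcm : c ∈ IsLocalRing.maximalIdeal R := hcn
    apply h2
    rw [pow_succ', ← hc]
    exact Ideal.mul_mem_mul hcm hgmem
  have : Ideal.span {a} = Ideal.span {g} := by
    apply le_antisymm
    · rw [Ideal.span_singleton_le_span_singleton]
      exact ⟨c, by rw [← hc]; ring⟩
    · rw [Ideal.span_singleton_le_span_singleton]
      refine ⟨↑hcu.unit⁻¹, ?_⟩
      rw [← hc]
      rw [show c * g * ↑hcu.unit⁻¹ = (↑hcu.unit⁻¹ * c) * g by ring,
        hcu.val_inv_mul,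
        one_mul]
  rw [this, hg']

/-- Over a finite commutative local principal ring, if `a ∈ J(R)^l \ J(R)^(l+1)` and
`b ∈ J(R)^k \ J(R)^(k+1)` with `k ≥ l`, then `{t a + w b : t ∈ R, w ∈ U(R)} = J(R)^l`. -/
theorem ta_add_wb_eq_pow_of_ge (R : Type*) [CommRing R] [Finite R] [IsLocalRing R]
    [IsPrincipalIdealRing R] (k l : ℕ) (hkl : l ≤ k) (a b : R)
    (hal : a ∈ (IsLocalRing.maximalIdeal R) ^ l ∧
      a ∉ (IsLocalRing.maximalIdeal R) ^ (l + 1))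
    (hbk : b ∈ (IsLocalRing.maximalIdeal R) ^ k ∧
      b ∉ (IsLocalRing.maximalIdeal R) ^ (k + 1)) :
    {y : R | ∃ t w : R, IsUnit w ∧ y = t * a + w * b} =
      (((IsLocalRing.maximalIdeal R) ^ l : Ideal R) : Set R) := by
  have hbl : b ∈ (IsLocalRing.maximalIdeal R) ^ l :=
    Ideal.pow_le_pow_right hkl hbk.1
  have hspan := span_eq_pow_of_mem_not_mem R l a hal.1 hal.2
  ext y
  constructor
  · rintro ⟨t, w, hw, rfl⟩
    exact add_mem (Ideal.mul_mem_left _ _ hal.1) (Ideal.mul_mem_left _ _ hbl)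
  · intro hy
    have : y - b ∈ Ideal.span {a} := by
      rw [hspan]; exact sub_mem hy hbl
    obtain ⟨t, ht⟩ := Ideal.mem_span_singleton'.mp this
    exact ⟨t, 1, isUnit_one, by rw [one_mul, ht]; ring⟩
end

section
/- Let R be a finite commutative local principal ring with J(R) = (x), and let a ∈ J(R)^l \ J(R)^{l+1}, b ∈ J(R)^k \ J(R)^{k+1}. If k ≥ l then M(a,b) is GL₂(R)-conjugate to M(a,0); if k < l then M(a,b) is GL₂(R)-conjugate to M(a, x^k). -/
lemma exists_unit_mul_pow (R : Type*) [CommRing R] [IsLocalRing R] (x : R)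
    (hx : IsLocalRing.maximalIdeal R = Ideal.span {x}) (n : ℕ) (a : R)
    (h1 : a ∈ (IsLocalRing.maximalIdeal R) ^ n)
    (h2 : a ∉ (IsLocalRing.maximalIdeal R) ^ (n + 1)) :
    ∃ u : Rˣ, a = (u : R) * x ^ n := by
  rw [hx, Ideal.span_singleton_pow] at h1 h2
  obtain ⟨c, hc⟩ := Ideal.mem_span_singleton'.mp h1
  by_cases hu : IsUnit c
  · exact ⟨hu.unit, by rw [IsUnit.unit_spec, ← hc]⟩
  · exfalso
    have hcm : c ∈ IsLocalRing.maximalIdeal R := hu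
    rw [hx, Ideal.mem_span_singleton'] at hcm
    obtain ⟨d, hd⟩ := hcm
    apply h2
    rw [Ideal.mem_span_singleton']
    exact ⟨d, by rw [← hc, ← hd, pow_succ]; ring⟩

/-- Over a finite commutative local principal ring with `J(R) = (x)`, if
`a ∈ J(R)^l \ J(R)^(l+1)` and `b ∈ J(R)^k \ J(R)^(k+1)`, then `M(a,b)` is
`GL₂(R)`-conjugate to `M(a,0)` when `k ≥ l`, and to `M(a, x^k)` when `k < l`. -/
theorem Mab_conjugate_normal_form (R : Type*) [CommRing R] [Finite R] [IsLocalRing R]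
    [IsPrincipalIdealRing R] (x : R) (hx : IsLocalRing.maximalIdeal R = Ideal.span {x})
    (k l : ℕ) (a b : R)
    (hal : a ∈ (IsLocalRing.maximalIdeal R) ^ l ∧
      a ∉ (IsLocalRing.maximalIdeal R) ^ (l + 1))
    (hbk : b ∈ (IsLocalRing.maximalIdeal R) ^ k ∧
      b ∉ (IsLocalRing.maximalIdeal R) ^ (k + 1)) :
    (l ≤ k → ∃ P : (Matrix (Fin 2) (Fin 2) R)ˣ,
      !![a, b; 0, 0] = (P : Matrix (Fin 2) (Fin 2) R) * !![a, 0; 0, 0] *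
        ((P⁻¹ : _) : Matrix (Fin 2) (Fin 2) R)) ∧
    (k < l → ∃ P : (Matrix (Fin 2) (Fin 2) R)ˣ,
      !![a, b; 0, 0] = (P : Matrix (Fin 2) (Fin 2) R) * !![a, x ^ k; 0, 0] *
        ((P⁻¹ : _) : Matrix (Fin 2) (Fin 2) R)) := by
  obtain ⟨u, hu⟩ := exists_unit_mul_pow R x hx l a hal.1 hal.2
  obtain ⟨v, hv⟩ := exists_unit_mul_pow R x hx k b hbk.1 hbk.2
  constructor
  · intro hlk
    set t : R := (v : R) * ((u⁻¹ : Rˣ) : R) * x ^ (k - l) with ht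
    have hat : a * t = b := by
      rw [hu, hv, ht]
      have : x ^ l * x ^ (k - l) = x ^ k := by
        rw [← pow_add, Nat.add_sub_cancel' hlk]
      calc (u : R) * x ^ l * ((v : R) * ((u⁻¹ : Rˣ) : R) * x ^ (k - l))
          = ((u : R) * ((u⁻¹ : Rˣ) : R)) * (v : R) * (x ^ l * x ^ (k - l)) := by ring
        _ = (v : R) * x ^ k := by rw [u.mul_inv, this, one_mul]
    refine ⟨⟨!![1, -t; 0, 1], !![1, t; 0, 1], ?_, ?_⟩, ?_⟩
    · rw [Matrix.mul_fin_two]; norm_num; exact Matrix.one_fin_two.symm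
    · rw [Matrix.mul_fin_two]; norm_num; exact Matrix.one_fin_two.symm
    · show !![a, b; 0, 0] = !![1, -t; 0, 1] * !![a, 0; 0, 0] * !![1, t; 0, 1]
      rw [Matrix.mul_fin_two, Matrix.mul_fin_two]
      norm_num [hat]
  · intro _
    refine ⟨⟨!![1, 0; 0, ((v⁻¹ : Rˣ) : R)], !![1, 0; 0, (v : R)], ?_, ?_⟩, ?_⟩
    · rw [Matrix.mul_fin_two]; norm_num [v.inv_mul]; exact Matrix.one_fin_two.symm
    · rw [Matrix.mul_fin_two]; norm_num [v.mul_inv]; exact Matrix.one_fin_two.symm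
    · show !![a, b; 0, 0] = !![1, 0; 0, ((v⁻¹ : Rˣ) : R)] * !![a, x ^ k; 0, 0] * !![1, 0; 0, (v : R)]
      rw [Matrix.mul_fin_two, Matrix.mul_fin_two]
      norm_num [hv, mul_comm]
end
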